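/- arXiv:1705.02442 — 8 statements merged into one kernel-verified Lean document; each statement's English description precedes it below -/
import Mathlib

section
/- (Rankin's bound.) For all real x ≥ 1, y ≥ 2 and every σ with 0 < σ < 1, one has Ψ(x,y) ≤ x^σ · ζ(σ,y). -/
/-- `Ψ(x,y)`: the number of positive integers `n ≤ x` all of whose prime
factors are at most `y` (i.e. `P(n) ≤ y`). -/
noncomputable def Psi (x y : ℝ) : ℕ :=
  ((Finset.Icc 1 ⌊x⌋₊).filter (fun n : ℕ => ∀ p ∈ n.primeFactors, (p : ℝ) ≤ y)).card

/-- `ζ(σ,y) = ∏_{p ≤ y, p prime} (1 - p^{-σ})⁻¹` for real `σ`. -/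
noncomputable def zetaR (s y : ℝ) : ℝ :=
  ∏ p ∈ (Finset.range (⌊y⌋₊ + 1)).filter Nat.Prime, (1 - (p : ℝ) ^ (-s))⁻¹

theorem stmt_2 (x y σ : ℝ) (hx : 1 ≤ x) (hy : 2 ≤ y) (hσ0 : 0 < σ) (hσ1 : σ < 1) :
    (Psi x y : ℝ) ≤ x ^ σ * zetaR σ y := by
  classical
  set N := ⌊y⌋₊ + 1 with hN
  set f : ℕ → ℝ := fun n => (n : ℝ) ^ (-σ) with hf
  set T := ((Finset.Icc 1 ⌊x⌋₊).filter (fun n : ℕ => ∀ p ∈ n.primeFactors, (p : ℝ) ≤ y)) with hT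
  have hf₁ : f 1 = 1 := by simp [hf]
  have hmul : ∀ {m n : ℕ}, Nat.Coprime m n → f (m * n) = f m * f n := by
    intro m n _
    simp only [hf, Nat.cast_mul]
    exact Real.mul_rpow (Nat.cast_nonneg m) (Nat.cast_nonneg n)
  have hpow : ∀ (p n : ℕ), f (p ^ n) = ((p : ℝ) ^ (-σ)) ^ n := by
    intro p n
    simp only [hf, Nat.cast_pow]
    rw [← Real.rpow_natCast (p : ℝ) n, ← Real.rpow_mul (Nat.cast_nonneg p),
      mul_comm, Real.rpow_mul (Nat.cast_nonneg p), Real.rpow_natCast]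
  have hr : ∀ p : ℕ, p.Prime → (p : ℝ) ^ (-σ) < 1 := fun p hp =>
    Real.rpow_lt_one_of_one_lt_of_neg (by exact_mod_cast hp.one_lt) (by linarith)
  have hr0 : ∀ p : ℕ, (0:ℝ) ≤ (p : ℝ) ^ (-σ) := fun p => Real.rpow_nonneg (Nat.cast_nonneg p) _
  have hsum : ∀ {p : ℕ}, p.Prime → Summable (fun n : ℕ ↦ ‖f (p ^ n)‖) := by
    intro p hp
    simp only [hpow, Real.norm_eq_abs, abs_of_nonneg (pow_nonneg (hr0 p) _)]
    exact summable_geometric_of_lt_one (hr0 p) (hr p hp)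
  obtain ⟨-, hHasSum⟩ :=
    EulerProduct.summable_and_hasSum_smoothNumbers_prod_primesBelow_tsum hf₁ hmul hsum N
  have hprod : (∏ p ∈ N.primesBelow, ∑' n : ℕ, f (p ^ n)) = zetaR σ y := by
    unfold zetaR
    rw [Nat.primesBelow]
    refine Finset.prod_congr rfl fun p hp => ?_
    have hpp : p.Prime := (Finset.mem_filter.mp hp).2
    simp only [hpow]
    exact tsum_geometric_of_lt_one (hr0 p) (hr p hpp)
  rw [hprod] at hHasSum
  -- every n ∈ T is N-smooth
  have hTsm : ∀ n ∈ T, n ∈ N.smoothNumbers := by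
    intro n hn
    rw [Finset.mem_filter, Finset.mem_Icc] at hn
    refine Nat.mem_smoothNumbers_of_primeFactors_subset (by omega) ?_
    intro p hp
    have hple : p ≤ ⌊y⌋₊ := Nat.le_floor (hn.2 p hp)
    exact Finset.mem_range.mpr (by omega)
  -- sum of f over T is at most zetaR
  have hTsum : ∑ n ∈ T, f n ≤ zetaR σ y := by
    have hinj : Function.Injective (fun n : {n // n ∈ T} => (⟨n.1, hTsm n.1 n.2⟩ : N.smoothNumbers)) := by
      intro a b h
      simp only [Subtype.mk.injEq] at h
      exact Subtype.ext h
    have heq : ∑ n ∈ T, f n = ∑ m ∈ T.attach.map ⟨_, hinj⟩, f m := by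
      rw [Finset.sum_map]
      exact (Finset.sum_attach T f).symm
    rw [heq]
    exact sum_le_hasSum _ (fun m _ => Real.rpow_nonneg (Nat.cast_nonneg _) _) hHasSum
  -- 1 ≤ x^σ * f n for n ∈ T
  have hterm : ∀ n ∈ T, (1:ℝ) ≤ x ^ σ * f n := by
    intro n hn
    rw [Finset.mem_filter, Finset.mem_Icc] at hn
    have hn1 : 1 ≤ n := hn.1.1
    have hnx : (n : ℝ) ≤ x :=
      le_trans (Nat.cast_le.mpr hn.1.2) (Nat.floor_le (by linarith))
    have hn0 : (0:ℝ) < (n : ℝ) := by exact_mod_cast hn1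
    have h1 : (n : ℝ) ^ σ ≤ x ^ σ :=
      Real.rpow_le_rpow (le_of_lt hn0) hnx (le_of_lt hσ0)
    have h2 : (0:ℝ) < (n : ℝ) ^ σ := Real.rpow_pos_of_pos hn0 σ
    have : f n = ((n : ℝ) ^ σ)⁻¹ := by
      simp only [hf]; rw [Real.rpow_neg (le_of_lt hn0)]
    rw [this]
    calc (1:ℝ) = (n:ℝ)^σ * ((n:ℝ)^σ)⁻¹ := (mul_inv_cancel₀ (ne_of_gt h2)).symm
      _ ≤ x ^ σ * ((n:ℝ)^σ)⁻¹ := by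
          apply mul_le_mul_of_nonneg_right h1 (inv_nonneg.mpr (le_of_lt h2))
  have hxσ : (0:ℝ) ≤ x ^ σ := Real.rpow_nonneg (by linarith) σ
  calc (Psi x y : ℝ) = ∑ _n ∈ T, (1:ℝ) := by simp [Psi, hT]
    _ ≤ ∑ n ∈ T, x ^ σ * f n := Finset.sum_le_sum hterm
    _ = x ^ σ * ∑ n ∈ T, f n := by rw [Finset.mul_sum]
    _ ≤ x ^ σ * zetaR σ y := mul_le_mul_of_nonneg_left hTsum hxσ
end

section
/- Let y ≥ 2, α > 0 and t be real, s = α + it. Then |ζ(s,y)/ζ(α,y)| = ∏_{p ≤ y, p prime} ( 1 + 2(1 − cos(t·log p))/( p^α·(1 − p^{−α})² ) )^{−1/2}, and this quantity is at most exp( −∑_{p ≤ y, p prime} (1 − cos(t·log p))/p^α ). -/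
/-- `ζ(s,y) = ∏_{p ≤ y, p prime} (1 - p^{-s})⁻¹` for complex `s`. -/
noncomputable def zetaC (s : ℂ) (y : ℝ) : ℂ :=
  ∏ p ∈ (Finset.range (⌊y⌋₊ + 1)).filter Nat.Prime, (1 - (p : ℂ) ^ (-s))⁻¹

/-!
Writing `x = p^{-α}` and `θ = t log p`, the Euler factors satisfy
`|1 - p^{-s}|² = (1 - x)² + 2x(1 - cos θ)` and `|1 - p^{-α}| = 1 - x`, which gives the product
formula factor by factor. For the bound it suffices that `exp (2cx) ≤ 1 + 2cx/(1 - x)²` for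
`c = 1 - cos θ ∈ [0, 2]`: both sides agree at `c = 0`, the left side is convex in `c`, and at
`c = 2` the inequality is `exp (2x) ≤ (1 + x)/(1 - x)`, i.e. `2x ≤ 2 artanh x`.
-/

open Real Finset

lemma two_mul_le_log_div {x : ℝ} (hx0 : 0 ≤ x) (hx1 : x < 1) :
    2 * x ≤ log ((1 + x) / (1 - x)) := by
  have hs := hasSum_log_sub_log_of_abs_lt_one (abs_lt.2 ⟨by linarith, hx1⟩)
  rw [← log_div (by linarith) (by linarith)] at hs
  simpa using le_hasSum hs 0 fun k _ => by positivity

lemma exp_two_mul_le {x : ℝ} (hx0 : 0 ≤ x) (hx1 : x < 1) :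
    exp (2 * x) ≤ (1 + x) / (1 - x) :=
  (le_log_iff_exp_le (div_pos (by linarith) (by linarith))).1 (two_mul_le_log_div hx0 hx1)

lemma exp_two_mul_mul_le {c x : ℝ} (hc0 : 0 ≤ c) (hc2 : c ≤ 2) (hx0 : 0 ≤ x) (hx1 : x < 1) :
    exp (2 * (c * x)) ≤ 1 + 2 * (c * x) / (1 - x) ^ 2 := by
  have h1x : 0 < 1 - x := by linarith
  have hconv : exp (2 * (c * x)) ≤ (1 - c / 2) + c / 2 * exp (4 * x) := by
    have := convexOn_exp.2 (Set.mem_univ 0) (Set.mem_univ (4 * x))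
      (by linarith : 0 ≤ 1 - c / 2) (by linarith : 0 ≤ c / 2) (by ring)
    rw [show 2 * (c * x) = (1 - c / 2) * 0 + c / 2 * (4 * x) by ring]
    simpa using this
  have hend : exp (4 * x) ≤ ((1 + x) / (1 - x)) ^ 2 := by
    rw [show 4 * x = 2 * x + 2 * x by ring, exp_add, ← sq]
    exact pow_le_pow_left₀ (exp_pos _).le (exp_two_mul_le hx0 hx1) 2
  calc exp (2 * (c * x)) ≤ (1 - c / 2) + c / 2 * ((1 + x) / (1 - x)) ^ 2 := by
        refine hconv.trans ?_; gcongr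
    _ = 1 + 2 * (c * x) / (1 - x) ^ 2 := by
        field_simp; ring

lemma norm_one_sub_cpow_sq {b : ℝ} (hb : 0 < b) (α t : ℝ) :
    ‖1 - (b : ℂ) ^ (-(α + t * Complex.I))‖ ^ 2 =
      (1 - b ^ (-α)) ^ 2 + 2 * b ^ (-α) * (1 - cos (t * log b)) := by
  rw [Complex.cpow_def_of_ne_zero (by exact_mod_cast hb.ne'), ← Complex.ofReal_log hb.le,
    Complex.sq_norm, Complex.normSq_apply, rpow_def_of_pos hb]
  simp only [neg_add_rev, Complex.sub_re, Complex.one_re, Complex.exp_re, Complex.mul_re,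
    Complex.ofReal_re, Complex.add_re, Complex.neg_re, Complex.I_re, mul_zero, Complex.ofReal_im,
    Complex.I_im, mul_one, sub_self, neg_zero, zero_add, mul_neg, Complex.add_im, Complex.neg_im,
    Complex.mul_im, add_zero, zero_mul, sub_zero, cos_neg, Complex.sub_im, Complex.one_im,
    Complex.exp_im, sin_neg, sub_neg_eq_add]
  rw [mul_comm t]
  linear_combination rexp (-(log b * α)) ^ 2 * sin_sq_add_cos_sq (log b * t)

lemma norm_one_sub_cpow_neg {b α : ℝ} (hb : 1 < b) (hα : 0 < α) :
    ‖1 - (b : ℂ) ^ (-(α : ℂ))‖ = 1 - b ^ (-α) := by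
  have hx : b ^ (-α) < 1 := rpow_lt_one_of_one_lt_of_neg hb (neg_neg_of_pos hα)
  have := norm_one_sub_cpow_sq (zero_lt_one.trans hb) α 0
  simp only [Complex.ofReal_zero, zero_mul, add_zero, cos_zero, sub_self, mul_zero] at this
  exact (sq_eq_sq₀ (norm_nonneg _) (by linarith)).1 this

lemma rpow_eq_inv_rpow_neg {b : ℝ} (hb : 0 ≤ b) (α : ℝ) : b ^ α = (b ^ (-α))⁻¹ := by
  rw [rpow_neg hb, inv_inv]

lemma norm_euler_factor_div {b α : ℝ} (hb : 1 < b) (hα : 0 < α) (t : ℝ) :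
    ‖(1 - (b : ℂ) ^ (-(α + t * Complex.I)))⁻¹ / (1 - (b : ℂ) ^ (-(α : ℂ)))⁻¹‖ =
      (1 + 2 * (1 - cos (t * log b)) / (b ^ α * (1 - b ^ (-α)) ^ 2)) ^ (-(1 : ℝ) / 2) := by
  have hb0 : 0 < b := zero_lt_one.trans hb
  have hx1 : b ^ (-α) < 1 := rpow_lt_one_of_one_lt_of_neg hb (neg_neg_of_pos hα)
  have hbase : 1 + 2 * (1 - cos (t * log b)) / (b ^ α * (1 - b ^ (-α)) ^ 2) =
      (‖1 - (b : ℂ) ^ (-(α + t * Complex.I))‖ / ‖1 - (b : ℂ) ^ (-(α : ℂ))‖) ^ 2 := by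
    rw [div_pow, norm_one_sub_cpow_sq hb0, norm_one_sub_cpow_neg hb hα,
      rpow_eq_inv_rpow_neg hb0.le α]
    have : 1 - b ^ (-α) ≠ 0 := by linarith
    field_simp
  rw [hbase, ← rpow_natCast, ← rpow_mul (by positivity), norm_div, norm_inv, norm_inv,
    inv_div_inv, show ((2 : ℕ) : ℝ) * (-1 / 2) = -1 by norm_num, rpow_neg_one, inv_div]

lemma euler_factor_div_le {b α : ℝ} (hb : 1 < b) (hα : 0 < α) (t : ℝ) :
    (1 + 2 * (1 - cos (t * log b)) / (b ^ α * (1 - b ^ (-α)) ^ 2)) ^ (-(1 : ℝ) / 2) ≤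
      exp (-((1 - cos (t * log b)) / b ^ α)) := by
  have hb0 : 0 < b := zero_lt_one.trans hb
  have hx0 : 0 < b ^ (-α) := rpow_pos_of_pos hb0 _
  have hx1 : b ^ (-α) < 1 := rpow_lt_one_of_one_lt_of_neg hb (neg_neg_of_pos hα)
  have hc0 : 0 ≤ 1 - cos (t * log b) := sub_nonneg.2 (cos_le_one _)
  have hc2 : 1 - cos (t * log b) ≤ 2 := by linarith [neg_one_le_cos (t * log b)]
  rw [rpow_eq_inv_rpow_neg hb0.le α, div_inv_eq_mul, inv_mul_eq_div, div_div_eq_mul_div,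
    mul_assoc]
  calc _ ≤ exp (2 * ((1 - cos (t * log b)) * b ^ (-α))) ^ (-(1 : ℝ) / 2) :=
        rpow_le_rpow_of_nonpos (exp_pos _) (exp_two_mul_mul_le hc0 hc2 hx0.le hx1) (by norm_num)
    _ = _ := by rw [← exp_mul]; ring_nf

theorem stmt_7_general (y α t : ℝ) (hα : 0 < α) :
    ‖zetaC ((α : ℂ) + (t : ℂ) * Complex.I) y / zetaC (α : ℂ) y‖ =
        ∏ p ∈ (Finset.range (⌊y⌋₊ + 1)).filter Nat.Prime,
          (1 + 2 * (1 - Real.cos (t * Real.log p)) /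
              ((p : ℝ) ^ α * (1 - (p : ℝ) ^ (-α)) ^ 2)) ^ (-(1 : ℝ) / 2) ∧
      (∏ p ∈ (Finset.range (⌊y⌋₊ + 1)).filter Nat.Prime,
          (1 + 2 * (1 - Real.cos (t * Real.log p)) /
              ((p : ℝ) ^ α * (1 - (p : ℝ) ^ (-α)) ^ 2)) ^ (-(1 : ℝ) / 2))
        ≤ Real.exp (-∑ p ∈ (Finset.range (⌊y⌋₊ + 1)).filter Nat.Prime,
            (1 - Real.cos (t * Real.log p)) / (p : ℝ) ^ α) := by
  have hprime : ∀ p ∈ (range (⌊y⌋₊ + 1)).filter Nat.Prime, 1 < (p : ℝ) := fun p hp => by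
    exact_mod_cast (mem_filter.1 hp).2.one_lt
  have hfactor : ∀ p ∈ (range (⌊y⌋₊ + 1)).filter Nat.Prime,
      ‖(1 - (p : ℂ) ^ (-((α : ℂ) + t * Complex.I)))⁻¹ / (1 - (p : ℂ) ^ (-(α : ℂ)))⁻¹‖ =
        (1 + 2 * (1 - cos (t * log p)) / ((p : ℝ) ^ α * (1 - (p : ℝ) ^ (-α)) ^ 2)) ^
          (-(1 : ℝ) / 2) := fun p hp => by
    simpa using norm_euler_factor_div (hprime p hp) hα t
  refine ⟨by rw [zetaC, zetaC, ← prod_div_distrib, norm_prod]; exact prod_congr rfl hfactor, ?_⟩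
  rw [← sum_neg_distrib, exp_sum]
  exact prod_le_prod (fun p hp => hfactor p hp ▸ norm_nonneg _)
    fun p hp => euler_factor_div_le (hprime p hp) hα t

theorem stmt_7 (y α t : ℝ) (hy : 2 ≤ y) (hα : 0 < α) :
    ‖zetaC ((α : ℂ) + (t : ℂ) * Complex.I) y / zetaC (α : ℂ) y‖ =
        ∏ p ∈ (Finset.range (⌊y⌋₊ + 1)).filter Nat.Prime,
          (1 + 2 * (1 - Real.cos (t * Real.log p)) /
              ((p : ℝ) ^ α * (1 - (p : ℝ) ^ (-α)) ^ 2)) ^ (-(1 : ℝ) / 2) ∧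
      (∏ p ∈ (Finset.range (⌊y⌋₊ + 1)).filter Nat.Prime,
          (1 + 2 * (1 - Real.cos (t * Real.log p)) /
              ((p : ℝ) ^ α * (1 - (p : ℝ) ^ (-α)) ^ 2)) ^ (-(1 : ℝ) / 2))
        ≤ Real.exp (-∑ p ∈ (Finset.range (⌊y⌋₊ + 1)).filter Nat.Prime,
            (1 - Real.cos (t * Real.log p)) / (p : ℝ) ^ α) :=
  stmt_7_general y α t hα
end

section
/- Let x > 0, y ≥ 2, α > 0 be real and let 0 < T₀ ≤ T. Then | ∫_{α+iT₀}^{α+iT} ζ(s,y)·x^s/s ds | ≤ x^α·ζ(α,y) · ∫_{T₀}^{T} exp( −W(y,1,t) ) · dt/√(α² + t²). -/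
/-- `W(v,w,t) = ∑_{w < p ≤ v, p prime} (1 - cos(t log p))/p^α`. -/
noncomputable def W (α v w t : ℝ) : ℝ :=
  ∑ p ∈ (Finset.range (⌊v⌋₊ + 1)).filter (fun p : ℕ => Nat.Prime p ∧ w < (p : ℝ)),
    (1 - Real.cos (t * Real.log p)) / (p : ℝ) ^ α

/-! For `‖z‖ < 1` the series `-log (1 - w) = ∑ wⁿ / n`, compared term by term at `w = z` and
`w = ‖z‖`, gives `‖1 - z‖⁻¹ ≤ (1 - ‖z‖)⁻¹ exp (-(‖z‖ - re z))`; only the term `n = 1` is kept.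
Applied to the Euler factors `z = p^{-s}` this bounds `‖ζ(α + it, y)‖` by `ζ(α, y) e^{-W(y,1,t)}`,
and the theorem follows by integrating this bound times `‖x^s / s‖ = x^α / √(α² + t²)`. -/

open Complex

theorem Complex.neg_log_norm_one_sub_le {z : ℂ} (hz : ‖z‖ < 1) :
    -Real.log ‖1 - z‖ ≤ -Real.log (1 - ‖z‖) - (‖z‖ - z.re) := by
  have hz' : ‖(‖z‖ : ℂ)‖ < 1 := by simpa using hz
  have hsum := (hasSum_re (hasSum_taylorSeries_neg_log hz')).sub
    (hasSum_re (hasSum_taylorSeries_neg_log hz))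
  have key := le_hasSum hsum 1 fun n _ => by
    simp only [div_natCast_re, ← ofReal_pow, ofReal_re, ← sub_div]
    exact div_nonneg (sub_nonneg.2 ((re_le_norm _).trans (norm_pow z n).le)) n.cast_nonneg
  simp only [neg_re, log_re, pow_one, Nat.cast_one, div_one, ofReal_re] at key
  have h1 : ‖1 - (‖z‖ : ℂ)‖ = 1 - ‖z‖ := by
    rw [← ofReal_one, ← ofReal_sub, Complex.norm_of_nonneg (by linarith)]
  rw [h1] at key
  linarith

theorem Complex.norm_one_sub_inv_le {z : ℂ} (hz : ‖z‖ < 1) :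
    ‖(1 - z)⁻¹‖ ≤ (1 - ‖z‖)⁻¹ * Real.exp (-(‖z‖ - z.re)) := by
  have hpos : 0 < ‖1 - z‖ :=
    norm_pos_iff.2 (sub_ne_zero.2 fun h => by simp [← h] at hz)
  calc ‖(1 - z)⁻¹‖ = Real.exp (-Real.log ‖1 - z‖) := by
        rw [norm_inv, Real.exp_neg, Real.exp_log hpos]
    _ ≤ Real.exp (-Real.log (1 - ‖z‖) - (‖z‖ - z.re)) :=
        Real.exp_le_exp.2 (neg_log_norm_one_sub_le hz)
    _ = (1 - ‖z‖)⁻¹ * Real.exp (-(‖z‖ - z.re)) := by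
        rw [sub_eq_add_neg, Real.exp_add, Real.exp_neg, Real.exp_log (by linarith)]

theorem Complex.re_ofReal_cpow_neg {b : ℝ} (hb : 0 < b) (α t : ℝ) :
    ((b : ℂ) ^ (-((α : ℂ) + t * I))).re = b ^ (-α) * Real.cos (t * Real.log b) := by
  rw [cpow_def_of_ne_zero (ofReal_ne_zero.2 hb.ne'), ← ofReal_log hb.le, exp_re,
    Real.rpow_def_of_pos hb]
  simp only [neg_re, neg_im, add_re, add_im, ofReal_re,
    ofReal_im, mul_re, mul_im, I_re, I_im]
  rw [← Real.cos_neg]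
  ring_nf

theorem Complex.norm_one_sub_ofReal_cpow_neg_inv_le {b α : ℝ} (hb : 1 < b) (hα : 0 < α)
    (t : ℝ) :
    ‖(1 - (b : ℂ) ^ (-((α : ℂ) + t * I)))⁻¹‖
      ≤ (1 - b ^ (-α))⁻¹ * Real.exp (-((1 - Real.cos (t * Real.log b)) / b ^ α)) := by
  have hb0 : 0 < b := by linarith
  have hnorm : ‖(b : ℂ) ^ (-((α : ℂ) + t * I))‖ = b ^ (-α) := by
    simp [norm_cpow_eq_rpow_re_of_pos hb0]
  have hlt : b ^ (-α) < 1 := Real.rpow_lt_one_of_one_lt_of_neg hb (by linarith)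
  convert norm_one_sub_inv_le (hnorm ▸ hlt) using 3
  · rw [hnorm]
  · rw [hnorm, re_ofReal_cpow_neg hb0, Real.rpow_neg hb0.le]
    ring

theorem norm_zetaC_le (y : ℝ) {α : ℝ} (hα : 0 < α) (t : ℝ) :
    ‖zetaC ((α : ℂ) + t * I) y‖ ≤ zetaR α y * Real.exp (-W α y 1 t) := by
  have hprimes : (Finset.range (⌊y⌋₊ + 1)).filter (fun p : ℕ => p.Prime ∧ (1 : ℝ) < p)
      = (Finset.range (⌊y⌋₊ + 1)).filter Nat.Prime :=
    Finset.filter_congr fun p _ => and_iff_left_of_imp fun hp => by exact_mod_cast hp.one_lt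
  rw [zetaC, zetaR, W, hprimes, norm_prod, ← Finset.sum_neg_distrib, Real.exp_sum,
    ← Finset.prod_mul_distrib]
  refine Finset.prod_le_prod (fun _ _ => norm_nonneg _) fun p hp => ?_
  have hp1 : (1 : ℝ) < p := by exact_mod_cast (Finset.mem_filter.1 hp).2.one_lt
  simpa only [ofReal_natCast] using norm_one_sub_ofReal_cpow_neg_inv_le hp1 hα t

theorem norm_zetaC_mul_cpow_div_le (y : ℝ) {x α : ℝ} (hx : 0 < x) (hα : 0 < α) (t : ℝ) :
    ‖zetaC ((α : ℂ) + t * I) y * (x : ℂ) ^ ((α : ℂ) + t * I) / ((α : ℂ) + t * I)‖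
      ≤ x ^ α * zetaR α y * (Real.exp (-W α y 1 t) / Real.sqrt (α ^ 2 + t ^ 2)) := by
  have hre : ((α : ℂ) + t * I).re = α := by simp
  rw [norm_div, norm_mul, norm_cpow_eq_rpow_re_of_pos hx, norm_add_mul_I, hre]
  calc ‖zetaC ((α : ℂ) + t * I) y‖ * x ^ α / Real.sqrt (α ^ 2 + t ^ 2)
      ≤ zetaR α y * Real.exp (-W α y 1 t) * x ^ α / Real.sqrt (α ^ 2 + t ^ 2) := by
        gcongr
        exact norm_zetaC_le y hα t
    _ = x ^ α * zetaR α y * (Real.exp (-W α y 1 t) / Real.sqrt (α ^ 2 + t ^ 2)) := by ring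

theorem continuous_exp_neg_W_div_sqrt (y : ℝ) {α : ℝ} (hα : 0 < α) :
    Continuous fun t => Real.exp (-W α y 1 t) / Real.sqrt (α ^ 2 + t ^ 2) := by
  refine Continuous.div ?_ (by fun_prop) fun t => (Real.sqrt_pos.2 (by positivity)).ne'
  unfold W
  fun_prop

theorem stmt_8_general (x y α T₀ T : ℝ) (hx : 0 < x) (hα : 0 < α)
    (hT : T₀ ≤ T) :
    ‖(Complex.I * ∫ t in T₀..T,
        zetaC ((α : ℂ) + (t : ℂ) * Complex.I) y *
          (x : ℂ) ^ ((α : ℂ) + (t : ℂ) * Complex.I) /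
          ((α : ℂ) + (t : ℂ) * Complex.I))‖
      ≤ x ^ α * zetaR α y *
        ∫ t in T₀..T, Real.exp (-W α y 1 t) / Real.sqrt (α ^ 2 + t ^ 2) := by
  rw [norm_mul, Complex.norm_I, one_mul, ← intervalIntegral.integral_const_mul]
  refine intervalIntegral.norm_integral_le_of_norm_le hT
    (Filter.Eventually.of_forall fun t _ => norm_zetaC_mul_cpow_div_le y hx hα t) ?_
  exact ((continuous_exp_neg_W_div_sqrt y hα).const_mul _).intervalIntegrable _ _

/-- The contour integral `∫_{α+iT₀}^{α+iT} ζ(s,y) x^s/s ds` along the vertical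
segment `s = α + it`, `T₀ ≤ t ≤ T`, is `i ∫_{T₀}^{T} ζ(α+it,y) x^{α+it}/(α+it) dt`. -/
theorem stmt_8 (x y α T₀ T : ℝ) (hx : 0 < x) (hy : 2 ≤ y) (hα : 0 < α)
    (hT₀ : 0 < T₀) (hT : T₀ ≤ T) :
    ‖(Complex.I * ∫ t in T₀..T,
        zetaC ((α : ℂ) + (t : ℂ) * Complex.I) y *
          (x : ℂ) ^ ((α : ℂ) + (t : ℂ) * Complex.I) /
          ((α : ℂ) + (t : ℂ) * Complex.I))‖
      ≤ x ^ α * zetaR α y *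
        ∫ t in T₀..T, Real.exp (-W α y 1 t) / Real.sqrt (α ^ 2 + t ^ 2) :=
  stmt_8_general x y α T₀ T hx hα hT
end

section
/- Let 1/2 < α < 1, let t be real, s = α + it, and let 1 < w < v be reals such that |θ(u) − u| ≤ 2·√u for all u ∈ [w,v] (this holds in particular when 1427 ≤ w < v ≤ 10^19). Then |F_s(v,w)| ≤ 2·( v^{1/2−α} + w^{1/2−α} ) + 2·|s|·( w^{1/2−α} − v^{1/2−α} )/( α − 1/2 ). -/
/-- Chebyshev's function `θ(x) = ∑_{p ≤ x, p prime} log p`. -/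
noncomputable def theta (x : ℝ) : ℝ :=
  ∑ p ∈ (Finset.range (⌊x⌋₊ + 1)).filter Nat.Prime, Real.log p

/-- `F_s(v,w) = ∑_{w < p ≤ v, p prime} (log p)/p^s − (v^{1−s} − w^{1−s})/(1−s)`. -/
noncomputable def Fs (s : ℂ) (v w : ℝ) : ℂ :=
  (∑ p ∈ (Finset.range (⌊v⌋₊ + 1)).filter (fun p : ℕ => Nat.Prime p ∧ w < (p : ℝ)),
      (Real.log p : ℂ) / (p : ℂ) ^ s) -
    ((v : ℂ) ^ (1 - s) - (w : ℂ) ^ (1 - s)) / (1 - s)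

/-! Partial summation against the weight `x ^ (-s)` writes `F_s(v, w)` as
`v^{-s} E(v) - w^{-s} E(w) + s ∫_w^v x^{-s-1} E(x) dx` with `E(x) = θ(x) - x`, the main term
`(v^{1-s} - w^{1-s})/(1-s)` being exactly the contribution of `x` to `θ(x)`. The bound
`|E(u)| ≤ 2 √u` then makes each boundary term at most `2 u^{1/2-α}` and the integral at most
`2 |s| ∫_w^v x^{-α-1/2} dx`. -/

open Complex Set intervalIntegral
open MeasureTheory (volume)

lemma theta_eq_chebyshev_theta : theta = Chebyshev.theta := by
  funext x
  rw [theta, Chebyshev.theta_eq_sum_Icc, Finset.range_eq_Ico, Finset.Ico_add_one_right_eq_Icc]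

lemma theta_mono : Monotone theta :=
  theta_eq_chebyshev_theta ▸ Chebyshev.theta_mono

lemma sum_Icc_primeLog_eq_theta (x : ℝ) :
    ∑ k ∈ Finset.Icc 0 ⌊x⌋₊, (if k.Prime then (Real.log k : ℂ) else 0) = theta x := by
  rw [← Finset.sum_filter, theta_eq_chebyshev_theta, Chebyshev.theta_eq_sum_Icc]
  push_cast
  rfl

lemma hasDerivAt_ofReal_cpow_neg (s : ℂ) {x : ℝ} (hx : 0 < x) :
    HasDerivAt (fun y : ℝ => (y : ℂ) ^ (-s)) (-s * (x : ℂ) ^ (-s - 1)) x :=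
  (hasStrictDerivAt_cpow_const (ofReal_mem_slitPlane.2 hx)).hasDerivAt.comp_ofReal

lemma continuousOn_ofReal_cpow {w v : ℝ} (hw : 0 < w) (z : ℂ) :
    ContinuousOn (fun x : ℝ => (x : ℂ) ^ z) (Icc w v) :=
  continuous_ofReal.continuousOn.cpow continuousOn_const
    fun _ hx => ofReal_mem_slitPlane.2 (hw.trans_le hx.1)

lemma sum_prime_log_div_cpow_eq (s : ℂ) {w v : ℝ} (hw : 0 < w) (hwv : w ≤ v) :
    ∑ p ∈ (Finset.range (⌊v⌋₊ + 1)).filter (fun p : ℕ => p.Prime ∧ w < (p : ℝ)),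
        (Real.log p : ℂ) / (p : ℂ) ^ s =
      (v : ℂ) ^ (-s) * theta v - (w : ℂ) ^ (-s) * theta w +
        s * ∫ x in w..v, (x : ℂ) ^ (-s - 1) * theta x := by
  set f : ℝ → ℂ := fun y => (y : ℂ) ^ (-s)
  have hderiv : EqOn (deriv f) (fun x => -s * (x : ℂ) ^ (-s - 1)) (Icc w v) := fun x hx =>
    (hasDerivAt_ofReal_cpow_neg s (hw.trans_le hx.1)).deriv
  have habel := sum_mul_eq_sub_sub_integral_mul (fun k => if k.Prime then (Real.log k : ℂ) else 0)
    hw.le hwv (fun x hx => (hasDerivAt_ofReal_cpow_neg s (hw.trans_le hx.1)).differentiableAt)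
    (((continuousOn_ofReal_cpow hw _).const_smul (-s)).integrableOn_Icc.congr_fun
      hderiv.symm measurableSet_Icc)
  have hprimes : (Finset.range (⌊v⌋₊ + 1)).filter (fun p : ℕ => p.Prime ∧ w < (p : ℝ)) =
      (Finset.Ioc ⌊w⌋₊ ⌊v⌋₊).filter Nat.Prime := by
    ext p
    simp only [Finset.mem_filter, Finset.mem_range, Finset.mem_Ioc, Nat.lt_succ_iff,
      Nat.floor_lt hw.le, Nat.le_floor_iff (hw.le.trans hwv)]
    tauto
  have hintegral : ∫ x in Ioc w v, deriv f x * theta x =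
      -(s * ∫ x in w..v, (x : ℂ) ^ (-s - 1) * theta x) := by
    rw [← integral_of_le hwv, ← integral_const_mul, ← integral_neg]
    refine integral_congr fun x hx => ?_
    rw [uIcc_of_le hwv] at hx
    simp only [hderiv hx]
    ring
  simp only [sum_Icc_primeLog_eq_theta] at habel
  rw [hprimes, Finset.sum_filter, ← sub_neg_eq_add, ← hintegral, ← habel]
  refine Finset.sum_congr rfl fun k _ => ?_
  split_ifs <;> simp [cpow_neg, div_eq_inv_mul]

lemma ofReal_cpow_neg_mul_self {x : ℝ} (hx : 0 < x) (s : ℂ) :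
    (x : ℂ) ^ (-s) * x = (x : ℂ) ^ (1 - s) := by
  rw [sub_eq_neg_add, cpow_add _ _ (ofReal_ne_zero.2 hx.ne'), cpow_one]

lemma cpow_one_sub_sub_div_eq {s : ℂ} (hs : s ≠ 1) {w v : ℝ} (hw : 0 < w) (hwv : w ≤ v) :
    ((v : ℂ) ^ (1 - s) - (w : ℂ) ^ (1 - s)) / (1 - s) =
      (v : ℂ) ^ (-s) * v - (w : ℂ) ^ (-s) * w + s * ∫ x in w..v, (x : ℂ) ^ (-s - 1) * x := by
  have hzero : (0 : ℝ) ∉ uIcc w v := notMem_uIcc_of_lt hw (hw.trans_le hwv)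
  have hintegral : ∫ x in w..v, (x : ℂ) ^ (-s - 1) * x = ∫ x in w..v, (x : ℂ) ^ (-s) := by
    refine integral_congr fun x hx => ?_
    rw [uIcc_of_le hwv] at hx
    have hx0 : (x : ℂ) ≠ 0 := ofReal_ne_zero.2 (hw.trans_le hx.1).ne'
    simp only [cpow_sub _ _ hx0, cpow_one, div_mul_cancel₀ _ hx0]
  have hs' : 1 - s ≠ 0 := sub_ne_zero.2 hs.symm
  rw [hintegral, integral_cpow (Or.inr ⟨fun h => hs (neg_inj.1 h), hzero⟩), neg_add_eq_sub,
    ofReal_cpow_neg_mul_self hw, ofReal_cpow_neg_mul_self (hw.trans_le hwv)]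
  field_simp
  ring

lemma Fs_eq_boundary_add_integral {s : ℂ} (hs : s ≠ 1) {w v : ℝ} (hw : 0 < w) (hwv : w ≤ v) :
    Fs s v w = (v : ℂ) ^ (-s) * ↑(theta v - v) - (w : ℂ) ^ (-s) * ↑(theta w - w) +
      s * ∫ x in w..v, (x : ℂ) ^ (-s - 1) * ↑(theta x - x) := by
  have hcont : ContinuousOn (fun x : ℝ => (x : ℂ) ^ (-s - 1)) (uIcc w v) := by
    rw [uIcc_of_le hwv]
    exact continuousOn_ofReal_cpow hw _
  have htheta : IntervalIntegrable (fun x => (x : ℂ) ^ (-s - 1) * theta x) volume w v := by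
    have h := theta_mono.intervalIntegrable (μ := volume) (a := w) (b := v)
    exact IntervalIntegrable.continuousOn_mul ⟨h.1.ofReal, h.2.ofReal⟩ hcont
  have hself : IntervalIntegrable (fun x => (x : ℂ) ^ (-s - 1) * x) volume w v :=
    (continuous_ofReal.intervalIntegrable w v).continuousOn_mul hcont
  rw [Fs, sum_prime_log_div_cpow_eq s hw hwv, cpow_one_sub_sub_div_eq hs hw hwv]
  simp only [ofReal_sub, mul_sub]
  rw [integral_sub htheta hself]
  ring

lemma norm_ofReal_cpow_neg_mul_le {x C e : ℝ} (hx : 0 < x) (z : ℂ) (he : |e| ≤ C * √x) :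
    ‖(x : ℂ) ^ (-z) * e‖ ≤ C * x ^ (1 / 2 - z.re) := by
  rw [norm_mul, norm_cpow_eq_rpow_re_of_pos hx, norm_real, Real.norm_eq_abs, neg_re]
  calc x ^ (-z.re) * |e| ≤ x ^ (-z.re) * (C * √x) := by gcongr
    _ = C * x ^ (1 / 2 - z.re) := by
      rw [Real.sqrt_eq_rpow, sub_eq_neg_add, Real.rpow_add hx]
      ring

lemma norm_integral_cpow_mul_le {s : ℂ} (hs : s.re ≠ 1 / 2) {C w v : ℝ} {E : ℝ → ℝ}
    (hw : 0 < w) (hwv : w ≤ v) (hE : ∀ u ∈ Icc w v, |E u| ≤ C * √u) :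
    ‖∫ x in w..v, (x : ℂ) ^ (-s - 1) * E x‖ ≤
      C * ((v ^ (1 / 2 - s.re) - w ^ (1 / 2 - s.re)) / (1 / 2 - s.re)) := by
  have hzero : (0 : ℝ) ∉ uIcc w v := notMem_uIcc_of_lt hw (hw.trans_le hwv)
  calc ‖∫ x in w..v, (x : ℂ) ^ (-s - 1) * E x‖ ≤ ∫ x in w..v, C * x ^ (-s.re - 1 / 2) := by
        refine norm_integral_le_of_norm_le hwv (.of_forall fun x hx => ?_)
          ((intervalIntegrable_rpow (Or.inr hzero)).const_mul C)
        have h := norm_ofReal_cpow_neg_mul_le (hw.trans hx.1) (s + 1)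
          (hE x (Ioc_subset_Icc_self hx))
        rwa [neg_add', add_re, one_re, show 1 / 2 - (s.re + 1) = -s.re - 1 / 2 by ring] at h
    _ = C * ((v ^ (1 / 2 - s.re) - w ^ (1 / 2 - s.re)) / (1 / 2 - s.re)) := by
      rw [integral_const_mul, integral_rpow (Or.inr ⟨fun h => hs (by linarith), hzero⟩)]
      ring_nf

theorem stmt_9 (α t w v : ℝ) (hα1 : 1 / 2 < α) (hα2 : α < 1)
    (hw : 1 < w) (hwv : w < v)
    (hθ : ∀ u ∈ Set.Icc w v, |theta u - u| ≤ 2 * Real.sqrt u) :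
    ‖Fs ((α : ℂ) + (t : ℂ) * Complex.I) v w‖
      ≤ 2 * (v ^ (1 / 2 - α) + w ^ (1 / 2 - α)) +
        2 * ‖(α : ℂ) + (t : ℂ) * Complex.I‖ *
          (w ^ (1 / 2 - α) - v ^ (1 / 2 - α)) / (α - 1 / 2) := by
  set s : ℂ := (α : ℂ) + (t : ℂ) * Complex.I
  have hre : s.re = α := by simp [s]
  have hs : s ≠ 1 := fun h => hα2.ne (by simpa [h] using hre.symm)
  have hw0 : 0 < w := by linarith
  have hboundary (u : ℝ) (hu : u ∈ Icc w v) : ‖(u : ℂ) ^ (-s) * ↑(theta u - u)‖ ≤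
      2 * u ^ (1 / 2 - α) :=
    hre ▸ norm_ofReal_cpow_neg_mul_le (hw0.trans_le hu.1) s (hθ u hu)
  have hintegral := norm_integral_cpow_mul_le (hre ▸ hα1.ne') hw0 hwv.le hθ
  rw [hre] at hintegral
  rw [Fs_eq_boundary_add_integral hs hw0 hwv.le]
  calc _ ≤ ‖(v : ℂ) ^ (-s) * ↑(theta v - v)‖ + ‖(w : ℂ) ^ (-s) * ↑(theta w - w)‖ +
        ‖s‖ * ‖∫ x in w..v, (x : ℂ) ^ (-s - 1) * ↑(theta x - x)‖ := by
        grw [norm_add_le, norm_sub_le, norm_mul s]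
    _ ≤ 2 * v ^ (1 / 2 - α) + 2 * w ^ (1 / 2 - α) +
        ‖s‖ * (2 * ((v ^ (1 / 2 - α) - w ^ (1 / 2 - α)) / (1 / 2 - α))) := by
        grw [hboundary v ⟨hwv.le, le_rfl⟩, hboundary w ⟨le_rfl, hwv.le⟩, hintegral]
    _ = _ := by
        have hne : α - 1 / 2 ≠ 0 := by linarith
        rw [show (1 : ℝ) / 2 - α = -(α - 1 / 2) by ring]
        field_simp
        ring
end

section
/- Let 1/2 < α < 1, β = 1 − α, let t be real, and for z > 1 set δ_z = t·log z − arctan(t/β). Let 1 < w < v be reals such that |θ(u) − u| ≤ 2·√u for all u ∈ [w,v] (this holds in particular when 1427 ≤ w < v ≤ 10^19). Then W(v,w,t)·log v ≥ (v^β − w^β)/β − ( v^β·cos δ_v − w^β·cos δ_w )/√(β² + t²) − 4·( v^{1/2−α} + w^{1/2−α} ) − 2·( α + √(α² + t²) )·( w^{1/2−α} − v^{1/2−α} )/( α − 1/2 ). -/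
/-!
Write `f(u) = (1 - cos(t log u)) u^(-α)`. Since `log p ≤ log v`, `W(v,w,t) log v` dominates
`∑_{w<p≤v} f(p) log p`, which Abel summation against `θ` turns into
`f(v)θ(v) - f(w)θ(w) - ∫_w^v f'(u) θ(u) du`. Splitting `θ(u) = u + (θ(u) - u)` and integrating the
main part by parts leaves `∫_w^v f`, which is elementary: it is the main term of the bound. The
remaining terms involve `θ(u) - u = O(√u)` against `|f(u)| ≤ 2u^(-α)` and
`|f'(u)| ≤ (α + √(α² + t²)) u^(-α-1)`; the latter integrates to the last term because `α > 1/2`.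
-/

open Real Finset MeasureTheory intervalIntegral
open scoped Chebyshev

theorem abs_mul_cos_add_mul_sin_le (a b x : ℝ) : |a * cos x + b * sin x| ≤ √(a ^ 2 + b ^ 2) := by
  rw [← sqrt_sq_eq_abs]
  exact sqrt_le_sqrt (by nlinarith [sq_nonneg (a * sin x - b * cos x), sin_sq_add_cos_sq x])

theorem cos_arctan_div {β : ℝ} (hβ : 0 < β) (t : ℝ) :
    cos (arctan (t / β)) = β / √(β ^ 2 + t ^ 2) := by
  rw [cos_arctan, show 1 + (t / β) ^ 2 = (β ^ 2 + t ^ 2) / β ^ 2 by field_simp,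
    sqrt_div' _ (sq_nonneg β), sqrt_sq hβ.le, one_div_div]

theorem sin_arctan_div {β : ℝ} (hβ : 0 < β) (t : ℝ) :
    sin (arctan (t / β)) = t / √(β ^ 2 + t ^ 2) := by
  rw [← tan_mul_cos (cos_arctan_pos _).ne', tan_arctan, cos_arctan_div hβ]
  field_simp

theorem rpow_mul_sqrt {u : ℝ} (hu : 0 < u) (r : ℝ) : u ^ r * √u = u ^ (r + 1 / 2) := by
  rw [sqrt_eq_rpow, ← rpow_add hu]

theorem integral_rpow_neg_sub_half {α w v : ℝ} (hα : 1 / 2 < α) (hw : 0 < w) (hwv : w ≤ v) :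
    ∫ u in w..v, u ^ (-α - 1 / 2) = (w ^ (1 / 2 - α) - v ^ (1 / 2 - α)) / (α - 1 / 2) := by
  have h0 : (0 : ℝ) ∉ Set.uIcc w v := by
    rw [Set.uIcc_of_le hwv]; exact fun h ↦ hw.not_ge h.1
  rw [integral_rpow (Or.inr ⟨by linarith, h0⟩), show -α - 1 / 2 + 1 = 1 / 2 - α by ring,
    ← neg_div_neg_eq, neg_sub, neg_sub]

theorem abs_integral_mul_le_of_abs_le_sqrt {g h : ℝ → ℝ} {K α w v : ℝ} (hα : 1 / 2 < α)
    (hw : 0 < w) (hwv : w ≤ v)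
    (hg : ∀ u ∈ Set.Icc w v, |g u| ≤ K * u ^ (-α - 1)) (hh : ∀ u ∈ Set.Icc w v, |h u| ≤ 2 * √u) :
    |∫ u in w..v, g u * h u| ≤ 2 * K * (w ^ (1 / 2 - α) - v ^ (1 / 2 - α)) / (α - 1 / 2) := by
  have hbound : ∀ u ∈ Set.Icc w v, |g u * h u| ≤ 2 * K * u ^ (-α - 1 / 2) := by
    intro u hu
    have hu0 : 0 < u := hw.trans_le hu.1
    calc |g u * h u| = |g u| * |h u| := abs_mul _ _
      _ ≤ K * u ^ (-α - 1) * (2 * √u) :=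
        mul_le_mul (hg u hu) (hh u hu) (abs_nonneg _) ((abs_nonneg _).trans (hg u hu))
      _ = 2 * K * u ^ (-α - 1 / 2) := by
        rw [mul_left_comm, mul_assoc, mul_assoc, rpow_mul_sqrt hu0,
          show -α - 1 + 1 / 2 = -α - 1 / 2 by ring]
  have hint : IntervalIntegrable (fun u ↦ 2 * K * u ^ (-α - 1 / 2)) volume w v :=
    (intervalIntegral.intervalIntegrable_rpow (Or.inr (by
      rw [Set.uIcc_of_le hwv]; exact fun h ↦ hw.not_ge h.1))).const_mul _
  calc |∫ u in w..v, g u * h u| ≤ ∫ u in w..v, 2 * K * u ^ (-α - 1 / 2) :=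
        norm_integral_le_of_norm_le (f := fun u ↦ g u * h u) hwv
          (.of_forall fun u hu ↦ hbound u (Set.Ioc_subset_Icc_self hu)) hint
    _ = 2 * K * (w ^ (1 / 2 - α) - v ^ (1 / 2 - α)) / (α - 1 / 2) := by
        rw [intervalIntegral.integral_const_mul, integral_rpow_neg_sub_half hα hw hwv,
          mul_div_assoc]

theorem theta_eq_chebyshev_theta_s11 (x : ℝ) : theta x = θ x := by
  rw [theta, Chebyshev.theta_eq_sum_Icc, Nat.range_succ_eq_Icc_zero]

theorem sum_primes_mul_log_eq {f : ℝ → ℝ} {w v : ℝ} (hw : 0 ≤ w) (hwv : w ≤ v)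
    (hf : ∀ u ∈ Set.Icc w v, DifferentiableAt ℝ f u)
    (hf' : IntegrableOn (deriv f) (Set.Icc w v)) :
    ∑ p ∈ (range (⌊v⌋₊ + 1)).filter (fun p : ℕ => p.Prime ∧ w < p), f p * log p =
      f v * θ v - f w * θ w - ∫ u in w..v, deriv f u * θ u := by
  let a : ℕ → ℝ := Set.indicator (Set.ofPred Nat.Prime) (fun n ↦ log n)
  have hθ (x : ℝ) : θ x = ∑ k ∈ Icc 0 ⌊x⌋₊, a k := by
    simp [a, Set.indicator_apply, Chebyshev.theta_eq_sum_Icc, sum_filter]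
  simp only [hθ, integral_of_le hwv]
  rw [← sum_mul_eq_sub_sub_integral_mul a hw hwv hf hf', sum_filter,
    show Ioc ⌊w⌋₊ ⌊v⌋₊ = (range (⌊v⌋₊ + 1)).filter (⌊w⌋₊ < ·) by ext; simp [and_comm],
    sum_filter]
  refine sum_congr rfl fun k _ ↦ ?_
  by_cases hk : k.Prime <;> simp [a, hk, Nat.floor_lt hw]

theorem sum_primes_mul_log_eq_integral_add {f f' : ℝ → ℝ} {w v : ℝ} (hw : 0 ≤ w) (hwv : w ≤ v)
    (hf : ∀ u ∈ Set.Icc w v, HasDerivAt f (f' u) u) (hf' : ContinuousOn f' (Set.Icc w v)) :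
    ∑ p ∈ (range (⌊v⌋₊ + 1)).filter (fun p : ℕ => p.Prime ∧ w < p), f p * log p =
      (∫ u in w..v, f u) + f v * (θ v - v) - f w * (θ w - w) -
        ∫ u in w..v, f' u * (θ u - u) := by
  have hderiv : Set.EqOn (deriv f) f' (Set.Icc w v) := fun u hu ↦ (hf u hu).deriv
  have hint' : IntervalIntegrable f' volume w v :=
    hf'.intervalIntegrable_of_Icc hwv
  have hparts : ∫ u in w..v, f u * 1 = f v * v - f w * w - ∫ u in w..v, f' u * u :=
    integral_mul_deriv_eq_deriv_mul (fun u hu ↦ hf u (by rwa [Set.uIcc_of_le hwv] at hu))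
      (fun u _ ↦ hasDerivAt_id u) hint' intervalIntegrable_const
  have hsplit : ∫ u in w..v, f' u * θ u =
      (∫ u in w..v, f' u * u) + ∫ u in w..v, f' u * (θ u - u) := by
    have hmain : IntervalIntegrable (fun u ↦ f' u * u) volume w v :=
      hint'.mul_continuousOn continuousOn_id
    have herror : IntervalIntegrable (fun u ↦ f' u * (θ u - u)) volume w v :=
      (Chebyshev.theta_mono.intervalIntegrable.sub intervalIntegrable_id).continuousOn_mul
        (by rwa [Set.uIcc_of_le hwv])
    rw [← integral_add hmain herror]
    simp only [mul_sub, add_sub_cancel]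
  rw [sum_primes_mul_log_eq hw hwv (fun u hu ↦ (hf u hu).differentiableAt)
    ((hf'.integrableOn_Icc).congr_fun hderiv.symm measurableSet_Icc),
    integral_congr (g := fun u ↦ f' u * θ u) (fun u hu ↦ by
      rw [Set.uIcc_of_le hwv] at hu; simp only [hderiv hu]), hsplit]
  simp only [mul_one] at hparts
  rw [hparts]
  ring

noncomputable def cosWeight (α t u : ℝ) : ℝ := (1 - cos (t * log u)) * u ^ (-α)

noncomputable def cosWeightDeriv (α t u : ℝ) : ℝ :=
  (t * sin (t * log u) - α * (1 - cos (t * log u))) * u ^ (-α - 1)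

theorem hasDerivAt_cosWeight (α t : ℝ) {u : ℝ} (hu : 0 < u) :
    HasDerivAt (cosWeight α t) (cosWeightDeriv α t u) u := by
  have hcos : HasDerivAt (fun u ↦ 1 - cos (t * log u)) (sin (t * log u) * (t * u⁻¹)) u := by
    simpa using (((hasDerivAt_log hu.ne').const_mul t).cos).const_sub 1
  refine (hcos.mul (hasDerivAt_rpow_const (p := -α) (Or.inl hu.ne'))).congr_deriv ?_
  rw [cosWeightDeriv, rpow_sub_one hu.ne']
  field_simp
  ring

theorem continuousOn_cosWeightDeriv (α t : ℝ) :
    ContinuousOn (cosWeightDeriv α t) (Set.Ioi 0) := by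
  intro u hu
  have : u ≠ 0 := (Set.mem_Ioi.mp hu).ne'
  refine ContinuousAt.continuousWithinAt ?_
  unfold cosWeightDeriv
  fun_prop (disch := simp [*])

theorem abs_cosWeight_le (α t : ℝ) {u : ℝ} (hu : 0 < u) : |cosWeight α t u| ≤ 2 * u ^ (-α) := by
  rw [cosWeight, abs_mul, abs_of_pos (rpow_pos_of_pos hu _)]
  gcongr
  rw [abs_le]
  constructor <;> linarith [neg_one_le_cos (t * log u), cos_le_one (t * log u)]

theorem abs_cosWeightDeriv_le {α : ℝ} (hα : 0 ≤ α) (t : ℝ) {u : ℝ} (hu : 0 < u) :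
    |cosWeightDeriv α t u| ≤ (α + √(α ^ 2 + t ^ 2)) * u ^ (-α - 1) := by
  rw [cosWeightDeriv, abs_mul, abs_of_pos (rpow_pos_of_pos hu _)]
  gcongr
  calc |t * sin (t * log u) - α * (1 - cos (t * log u))|
      = |(α * cos (t * log u) + t * sin (t * log u)) + -α| := by ring_nf
    _ ≤ |α * cos (t * log u) + t * sin (t * log u)| + |-α| := abs_add_le _ _
    _ ≤ α + √(α ^ 2 + t ^ 2) := by
      rw [abs_neg, abs_of_nonneg hα, add_comm α]
      gcongr
      exact abs_mul_cos_add_mul_sin_le α t _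

theorem abs_cosWeight_mul_le_of_abs_le_sqrt (α t : ℝ) {u x : ℝ} (hu : 0 < u)
    (hx : |x| ≤ 2 * √u) :
    |cosWeight α t u * x| ≤ 4 * u ^ (1 / 2 - α) :=
  calc |cosWeight α t u * x| = |cosWeight α t u| * |x| := abs_mul _ _
    _ ≤ 2 * u ^ (-α) * (2 * √u) :=
      mul_le_mul (abs_cosWeight_le α t hu) hx (abs_nonneg _) (by positivity)
    _ = 4 * u ^ (1 / 2 - α) := by
      rw [mul_mul_mul_comm, rpow_mul_sqrt hu, neg_add_eq_sub]
      norm_num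

theorem hasDerivAt_cosWeight_primitive {α β : ℝ} (t : ℝ) (hβ : β = 1 - α) (hβ0 : 0 < β)
    {u : ℝ} (hu : 0 < u) :
    HasDerivAt (fun u ↦ u ^ β / β - u ^ β * cos (t * log u - arctan (t / β)) / √(β ^ 2 + t ^ 2))
      (cosWeight α t u) u := by
  set φ := arctan (t / β)
  have hφ : cos (t * log u) =
      (β * cos (t * log u - φ) - t * sin (t * log u - φ)) / √(β ^ 2 + t ^ 2) := by
    rw [show t * log u = (t * log u - φ) + φ by ring, cos_add, cos_arctan_div hβ0,
      sin_arctan_div hβ0]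
    simp only [add_sub_cancel_right]
    ring
  have hpow : HasDerivAt (fun u ↦ u ^ β) (β * u ^ (β - 1)) u :=
    hasDerivAt_rpow_const (Or.inl hu.ne')
  have hcos : HasDerivAt (fun u ↦ cos (t * log u - φ)) (-sin (t * log u - φ) * (t * u⁻¹)) u :=
    (((hasDerivAt_log hu.ne').const_mul t).sub_const φ).cos
  refine ((hpow.div_const β).sub ((hpow.mul hcos).div_const _)).congr_deriv ?_
  rw [cosWeight, hφ, show -α = β - 1 by rw [hβ]; ring, rpow_sub_one hu.ne']
  field_simp
  ring

theorem integral_cosWeight {α β w v : ℝ} (t : ℝ) (hβ : β = 1 - α) (hβ0 : 0 < β)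
    (hw : 0 < w) (hwv : w ≤ v) :
    ∫ u in w..v, cosWeight α t u =
      (v ^ β - w ^ β) / β -
        (v ^ β * cos (t * log v - arctan (t / β)) - w ^ β * cos (t * log w - arctan (t / β))) /
          √(β ^ 2 + t ^ 2) := by
  have hpos : ∀ u ∈ Set.uIcc w v, 0 < u := fun u hu ↦ hw.trans_le (Set.uIcc_of_le hwv ▸ hu).1
  rw [integral_eq_sub_of_hasDerivAt
    (fun u hu ↦ hasDerivAt_cosWeight_primitive t hβ hβ0 (hpos u hu))]
  · ring
  · exact ContinuousOn.intervalIntegrable fun u hu ↦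
      (hasDerivAt_cosWeight α t (hpos u hu)).continuousAt.continuousWithinAt

theorem sum_cosWeight_mul_log_le (α v w t : ℝ) :
    ∑ p ∈ (range (⌊v⌋₊ + 1)).filter (fun p : ℕ => p.Prime ∧ w < p), cosWeight α t p * log p ≤
      W α v w t * log v := by
  rw [W, sum_mul]
  refine sum_le_sum fun p hp ↦ ?_
  simp only [mem_filter, mem_range] at hp
  have hp0 : (0 : ℝ) < p := mod_cast hp.2.1.pos
  have hpv : (p : ℝ) ≤ v := (Nat.le_floor_iff' hp.2.1.ne_zero).mp (Nat.lt_succ_iff.mp hp.1)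
  rw [cosWeight, rpow_neg hp0.le, ← div_eq_mul_inv]
  gcongr
  exact div_nonneg (sub_nonneg.mpr (cos_le_one _)) (by positivity)

theorem stmt_11 (α β t w v : ℝ) (hα1 : 1 / 2 < α) (hα2 : α < 1) (hβ : β = 1 - α)
    (hw : 1 < w) (hwv : w < v)
    (hθ : ∀ u ∈ Set.Icc w v, |theta u - u| ≤ 2 * Real.sqrt u) :
    W α v w t * Real.log v ≥
      (v ^ β - w ^ β) / β -
        (v ^ β * Real.cos (t * Real.log v - Real.arctan (t / β)) -
          w ^ β * Real.cos (t * Real.log w - Real.arctan (t / β))) /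
          Real.sqrt (β ^ 2 + t ^ 2) -
        4 * (v ^ (1 / 2 - α) + w ^ (1 / 2 - α)) -
        2 * (α + Real.sqrt (α ^ 2 + t ^ 2)) *
          (w ^ (1 / 2 - α) - v ^ (1 / 2 - α)) / (α - 1 / 2) := by
  have hw0 : 0 < w := one_pos.trans hw
  have hpos : ∀ u ∈ Set.Icc w v, 0 < u := fun u hu ↦ hw0.trans_le hu.1
  have hθ' : ∀ u ∈ Set.Icc w v, |θ u - u| ≤ 2 * √u := fun u hu ↦
    theta_eq_chebyshev_theta_s11 u ▸ hθ u hu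
  have hsum := sum_primes_mul_log_eq_integral_add hw0.le hwv.le
    (fun u hu ↦ hasDerivAt_cosWeight α t (hpos u hu))
    ((continuousOn_cosWeightDeriv α t).mono hpos)
  rw [integral_cosWeight t hβ (by linarith) hw0 hwv.le] at hsum
  have hboundary_v := abs_le.mp <| abs_cosWeight_mul_le_of_abs_le_sqrt α t (hw0.trans hwv)
    (hθ' v ⟨hwv.le, le_rfl⟩)
  have hboundary_w := abs_le.mp <| abs_cosWeight_mul_le_of_abs_le_sqrt α t hw0
    (hθ' w ⟨le_rfl, hwv.le⟩)
  have herror := abs_le.mp <| abs_integral_mul_le_of_abs_le_sqrt hα1 hw0 hwv.le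
    (fun u hu ↦ abs_cosWeightDeriv_le (by linarith) t (hpos u hu)) hθ'
  have hW := sum_cosWeight_mul_log_le α v w t
  linarith
end

section
/- Let 0 < α < 1, β = 1 − α, let t be real, and for z > 1 set δ_z = t·log z − arctan(t/β). Let ε > 0 and let 1 < w < v be reals such that |θ(u) − u| ≤ ε·u for all u ∈ [w,v]. Then W(v,w,t)·log v ≥ (v^β − w^β)/β − ( v^β·cos δ_v − w^β·cos δ_w )/√(β² + t²) − 2ε·( v^β + w^β ) − ε·( α + √(α² + t²) )·( v^β − w^β )/β. -/
/-!
Partial summation against `θ` writes `∑_{w<p≤v} f(p) log p`, for `f(u) = (1 - cos(t log u)) u^(-α)`,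
as `∫_w^v f` plus the boundary terms `f(u) (θ(u) - u)` at `u = v, w` minus `∫_w^v f'(u) (θ(u) - u) du`.
The main integral has a closed form because
`β cos(x - arctan(t/β)) - t sin(x - arctan(t/β)) = √(β² + t²) cos x`, so that
`u^β cos(t log u - arctan(t/β)) / √(β² + t²)` is a primitive of `u^(β-1) cos(t log u)`.
The hypothesis `|θ(u) - u| ≤ εu` bounds each boundary term by `2εu^β` and, as
`|f'(u)| ≤ (α + √(α² + t²)) u^(-α-1)`, the error integral by `ε(α + √(α² + t²))(v^β - w^β)/β`.
Finally `W(v,w,t) log v` dominates the prime sum because `log p ≤ log v`.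
-/

open Real Finset MeasureTheory intervalIntegral
open scoped Chebyshev

lemma theta_eq_chebyshevTheta : theta = θ := by
  funext x
  rw [theta, Chebyshev.theta_eq_sum_Icc, Nat.range_succ_eq_Icc_zero]

theorem sum_filter_prime_mul_log_eq {f f' : ℝ → ℝ} {w v : ℝ} (hw : 0 ≤ w) (hwv : w ≤ v)
    (hf : ∀ x ∈ Set.Icc w v, HasDerivAt f (f' x) x) (hf' : ContinuousOn f' (Set.Icc w v)) :
    ∑ p ∈ Ioc ⌊w⌋₊ ⌊v⌋₊ with p.Prime, f p * log p =
      f v * θ v - f w * θ w - ∫ x in w..v, f' x * θ x := by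
  have hderiv : Set.EqOn (deriv f) f' (Set.Icc w v) := fun x hx => (hf x hx).deriv
  have h := sum_mul_eq_sub_sub_integral_mul (fun k => if k.Prime then log k else 0) hw hwv
    (fun x hx => (hf x hx).differentiableAt)
    (hf'.integrableOn_Icc.congr_fun hderiv.symm measurableSet_Icc)
  simp only [mul_ite, mul_zero, ← sum_filter, ← Chebyshev.theta_eq_sum_Icc] at h
  rw [h, integral_of_le hwv]
  congr 1
  exact setIntegral_congr_fun measurableSet_Ioc
    fun x hx => by rw [hderiv (Set.Ioc_subset_Icc_self hx)]

theorem sum_filter_prime_mul_log_eq_integral_add {f f' : ℝ → ℝ} {w v : ℝ} (hw : 0 ≤ w)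
    (hwv : w ≤ v) (hf : ∀ x ∈ Set.Icc w v, HasDerivAt f (f' x) x)
    (hf' : ContinuousOn f' (Set.Icc w v)) :
    ∑ p ∈ Ioc ⌊w⌋₊ ⌊v⌋₊ with p.Prime, f p * log p =
      (∫ x in w..v, f x) + (f v * (θ v - v) - f w * (θ w - w)) -
        ∫ x in w..v, f' x * (θ x - x) := by
  have hf_u : ∀ x ∈ Set.uIcc w v, HasDerivAt f (f' x) x := by rwa [Set.uIcc_of_le hwv]
  have hf'_u : ContinuousOn f' (Set.uIcc w v) := by rwa [Set.uIcc_of_le hwv]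
  have hparts : ∫ x in w..v, f x * 1 = f v * v - f w * w - ∫ x in w..v, f' x * x :=
    integral_mul_deriv_eq_deriv_mul hf_u (fun x _ => hasDerivAt_id x) hf'_u.intervalIntegrable
      intervalIntegrable_const
  have hsplit : ∫ x in w..v, f' x * θ x =
      (∫ x in w..v, f' x * x) + ∫ x in w..v, f' x * (θ x - x) := by
    have hmain : IntervalIntegrable (fun x => f' x * x) volume w v :=
      hf'_u.intervalIntegrable.mul_continuousOn continuousOn_id
    have herr : IntervalIntegrable (fun x => f' x * (θ x - x)) volume w v :=
      (Chebyshev.theta_mono.intervalIntegrable.sub intervalIntegrable_id).continuousOn_mul hf'_u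
    rw [← integral_add hmain herr]
    congr 1 with x
    ring
  rw [sum_filter_prime_mul_log_eq hw hwv hf hf', hsplit]
  simp only [mul_one] at hparts
  linarith

lemma mul_cos_sub_arctan_sub_mul_sin_sub_arctan {β : ℝ} (t x : ℝ) (hβ : 0 < β) :
    β * cos (x - arctan (t / β)) - t * sin (x - arctan (t / β)) = √(β ^ 2 + t ^ 2) * cos x := by
  have hR2 : √(β ^ 2 + t ^ 2) ^ 2 = β ^ 2 + t ^ 2 := sq_sqrt (by positivity)
  have hs : √(1 + (t / β) ^ 2) = √(β ^ 2 + t ^ 2) / β := by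
    rw [show 1 + (t / β) ^ 2 = (β ^ 2 + t ^ 2) / β ^ 2 by field_simp,
      sqrt_div' _ (sq_nonneg β), sqrt_sq hβ.le]
  rw [cos_sub, sin_sub, cos_arctan, sin_arctan, hs]
  field_simp
  rw [hR2]
  ring

lemma hasDerivAt_rpow_mul_cos_log_sub_arctan {β : ℝ} (t : ℝ) (hβ : 0 < β) {u : ℝ} (hu : 0 < u) :
    HasDerivAt (fun u => u ^ β * cos (t * log u - arctan (t / β)))
      (√(β ^ 2 + t ^ 2) * cos (t * log u) * u ^ (β - 1)) u := by
  have h := (hasDerivAt_rpow_const (p := β) (Or.inl hu.ne')).mul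
    ((((hasDerivAt_log hu.ne').const_mul t).sub_const (arctan (t / β))).cos)
  refine h.congr_deriv ?_
  rw [← mul_cos_sub_arctan_sub_mul_sin_sub_arctan t _ hβ,
    show u ^ β = u ^ (β - 1) * u by rw [← rpow_add_one hu.ne', sub_add_cancel]]
  field_simp
  ring

theorem integral_one_sub_cos_mul_rpow {α : ℝ} (t : ℝ) (hα : α < 1) {w v : ℝ} (hw : 0 < w)
    (hwv : w ≤ v) :
    ∫ x in w..v, (1 - cos (t * log x)) * x ^ (-α) =
      (v ^ (1 - α) - w ^ (1 - α)) / (1 - α) -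
        (v ^ (1 - α) * cos (t * log v - arctan (t / (1 - α))) -
          w ^ (1 - α) * cos (t * log w - arctan (t / (1 - α)))) / √((1 - α) ^ 2 + t ^ 2) := by
  have hβ : 0 < 1 - α := by linarith
  have hpos : ∀ x ∈ Set.uIcc w v, 0 < x := fun x hx =>
    hw.trans_le (Set.uIcc_of_le hwv ▸ hx).1
  rw [integral_eq_sub_of_hasDerivAt (f := fun u =>
    u ^ (1 - α) / (1 - α) - u ^ (1 - α) * cos (t * log u - arctan (t / (1 - α))) /
      √((1 - α) ^ 2 + t ^ 2))]
  · ring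
  · intro x hx
    have h := ((hasDerivAt_rpow_const (p := 1 - α) (Or.inl (hpos x hx).ne')).div_const
      (1 - α)).sub ((hasDerivAt_rpow_mul_cos_log_sub_arctan t hβ (hpos x hx)).div_const
        √((1 - α) ^ 2 + t ^ 2))
    refine h.congr_deriv ?_
    rw [sub_sub_cancel_left]
    field_simp
  · refine ContinuousOn.intervalIntegrable ?_
    fun_prop (disch := grind)

lemma hasDerivAt_one_sub_cos_mul_rpow (α t : ℝ) {u : ℝ} (hu : 0 < u) :
    HasDerivAt (fun u => (1 - cos (t * log u)) * u ^ (-α))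
      ((t * sin (t * log u) - α * (1 - cos (t * log u))) * u ^ (-α - 1)) u := by
  have h := (((hasDerivAt_log hu.ne').const_mul t).cos.const_sub 1).mul
    (hasDerivAt_rpow_const (p := -α) (Or.inl hu.ne'))
  refine h.congr_deriv ?_
  rw [show u ^ (-α) = u ^ (-α - 1) * u by rw [← rpow_add_one hu.ne', sub_add_cancel]]
  field_simp
  ring

lemma abs_mul_sin_sub_mul_one_sub_cos_le {a : ℝ} (t y : ℝ) (ha : 0 ≤ a) :
    |t * sin y - a * (1 - cos y)| ≤ a + √(a ^ 2 + t ^ 2) := by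
  have h : |a * cos y + t * sin y| ≤ √(a ^ 2 + t ^ 2) :=
    abs_le_sqrt (by nlinarith [sin_sq_add_cos_sq y, sq_nonneg (a * sin y - t * cos y)])
  calc |t * sin y - a * (1 - cos y)| = |(a * cos y + t * sin y) + -a| := by ring_nf
    _ ≤ |a * cos y + t * sin y| + |-a| := abs_add_le _ _
    _ ≤ a + √(a ^ 2 + t ^ 2) := by rw [abs_neg, abs_of_nonneg ha]; linarith

lemma abs_one_sub_cos_mul_rpow_mul_sub_le {α t ε x : ℝ} (hx : 0 < x) (h : |θ x - x| ≤ ε * x) :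
    |(1 - cos (t * log x)) * x ^ (-α) * (θ x - x)| ≤ 2 * ε * x ^ (1 - α) := by
  have hcos : |1 - cos (t * log x)| ≤ 2 := by
    rw [abs_le]; constructor <;> linarith [neg_one_le_cos (t * log x), cos_le_one (t * log x)]
  have hpow : x ^ (-α) * x = x ^ (1 - α) := by
    rw [← rpow_add_one hx.ne']; ring_nf
  rw [abs_mul, abs_mul, abs_of_pos (rpow_pos_of_pos hx _)]
  calc |1 - cos (t * log x)| * x ^ (-α) * |θ x - x| ≤ 2 * x ^ (-α) * (ε * x) := by
        gcongr
    _ = 2 * ε * x ^ (1 - α) := by rw [← hpow]; ring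

theorem abs_integral_mul_theta_sub_self_le {g : ℝ → ℝ} {α C ε w v : ℝ} (hα : α < 1) (hw : 0 < w)
    (hwv : w ≤ v) (hg : ∀ x ∈ Set.Icc w v, |g x| ≤ C * x ^ (-α - 1))
    (hθ : ∀ x ∈ Set.Icc w v, |θ x - x| ≤ ε * x) :
    |∫ x in w..v, g x * (θ x - x)| ≤ ε * C * (v ^ (1 - α) - w ^ (1 - α)) / (1 - α) := by
  have hbound : ∀ x ∈ Set.Ioc w v, ‖g x * (θ x - x)‖ ≤ ε * C * x ^ (-α) := by
    intro x hx
    have hx0 : 0 < x := hw.trans hx.1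
    have hpow : x ^ (-α - 1) * x = x ^ (-α) := by
      rw [← rpow_add_one hx0.ne', sub_add_cancel]
    calc ‖g x * (θ x - x)‖ = |g x| * |θ x - x| := abs_mul _ _
      _ ≤ C * x ^ (-α - 1) * (ε * x) :=
          mul_le_mul (hg x (Set.Ioc_subset_Icc_self hx)) (hθ x (Set.Ioc_subset_Icc_self hx))
            (abs_nonneg _) ((abs_nonneg _).trans (hg x (Set.Ioc_subset_Icc_self hx)))
      _ = ε * C * x ^ (-α) := by rw [← hpow]; ring
  have hint : ∫ x in w..v, ε * C * x ^ (-α) = ε * C * (v ^ (1 - α) - w ^ (1 - α)) / (1 - α) := by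
    rw [intervalIntegral.integral_const_mul, integral_rpow (Or.inl (by linarith)), neg_add_eq_sub]
    ring
  rw [← hint, ← Real.norm_eq_abs]
  refine norm_integral_le_of_norm_le hwv (Filter.Eventually.of_forall hbound) ?_
  exact (intervalIntegral.intervalIntegrable_rpow' (by linarith)).const_mul _

lemma sum_filter_prime_mul_log_le_W_mul_log (α t : ℝ) {w v : ℝ} (hw : 0 ≤ w) :
    ∑ p ∈ Ioc ⌊w⌋₊ ⌊v⌋₊ with p.Prime, (1 - cos (t * log p)) * (p : ℝ) ^ (-α) * log p ≤
      W α v w t * log v := by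
  have hset : (range (⌊v⌋₊ + 1)).filter (fun p : ℕ => p.Prime ∧ w < p) =
      (Ioc ⌊w⌋₊ ⌊v⌋₊).filter Nat.Prime := by
    ext p
    simp only [mem_filter, mem_range, mem_Ioc, Nat.lt_succ_iff, ← Nat.floor_lt hw]
    tauto
  rw [W, hset, sum_mul]
  refine sum_le_sum fun p hp => ?_
  obtain ⟨hpI, hp⟩ := mem_filter.mp hp
  have hpv : p ≤ ⌊v⌋₊ := (mem_Ioc.mp hpI).2
  have hp0 : (0 : ℝ) < p := by exact_mod_cast hp.pos
  rw [rpow_neg hp0.le, ← div_eq_mul_inv]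
  refine mul_le_mul_of_nonneg_left (log_le_log hp0 ((Nat.le_floor_iff' hp.ne_zero).mp hpv)) ?_
  exact div_nonneg (by linarith [cos_le_one (t * log p)]) (rpow_nonneg hp0.le _)

theorem stmt_12_general (α β t w v ε : ℝ) (hα0 : 0 < α) (hα1 : α < 1) (hβ : β = 1 - α)
    (hw : 1 < w) (hwv : w < v)
    (hθ : ∀ u ∈ Set.Icc w v, |theta u - u| ≤ ε * u) :
    W α v w t * Real.log v ≥
      (v ^ β - w ^ β) / β -
        (v ^ β * Real.cos (t * Real.log v - Real.arctan (t / β)) -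
          w ^ β * Real.cos (t * Real.log w - Real.arctan (t / β))) /
          Real.sqrt (β ^ 2 + t ^ 2) -
        2 * ε * (v ^ β + w ^ β) -
        ε * (α + Real.sqrt (α ^ 2 + t ^ 2)) * (v ^ β - w ^ β) / β := by
  subst hβ
  rw [theta_eq_chebyshevTheta] at hθ
  have hw0 : 0 < w := by linarith
  have hpos : ∀ x ∈ Set.Icc w v, 0 < x := fun x hx => hw0.trans_le hx.1
  have hsum := sum_filter_prime_mul_log_eq_integral_add hw0.le hwv.le
    (fun x hx => hasDerivAt_one_sub_cos_mul_rpow α t (hpos x hx))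
    (by fun_prop (disch := grind))
  rw [integral_one_sub_cos_mul_rpow t hα1 hw0 hwv.le] at hsum
  have hderiv_le : ∀ x ∈ Set.Icc w v,
      |(t * sin (t * log x) - α * (1 - cos (t * log x))) * x ^ (-α - 1)| ≤
        (α + √(α ^ 2 + t ^ 2)) * x ^ (-α - 1) := fun x hx => by
    rw [abs_mul, abs_of_pos (rpow_pos_of_pos (hpos x hx) _)]
    exact mul_le_mul_of_nonneg_right (abs_mul_sin_sub_mul_one_sub_cos_le t _ hα0.le)
      (rpow_nonneg (hpos x hx).le _)
  have hbdry_v := abs_le.mp (abs_one_sub_cos_mul_rpow_mul_sub_le (α := α) (t := t)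
    (hpos v ⟨hwv.le, le_rfl⟩) (hθ v ⟨hwv.le, le_rfl⟩))
  have hbdry_w := abs_le.mp (abs_one_sub_cos_mul_rpow_mul_sub_le (α := α) (t := t) hw0
    (hθ w ⟨le_rfl, hwv.le⟩))
  have herr := abs_le.mp (abs_integral_mul_theta_sub_self_le hα1 hw0 hwv.le hderiv_le hθ)
  have hW := sum_filter_prime_mul_log_le_W_mul_log α t (v := v) hw0.le
  linarith

theorem stmt_12 (α β t w v ε : ℝ) (hα0 : 0 < α) (hα1 : α < 1) (hβ : β = 1 - α)
    (hε : 0 < ε) (hw : 1 < w) (hwv : w < v)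
    (hθ : ∀ u ∈ Set.Icc w v, |theta u - u| ≤ ε * u) :
    W α v w t * Real.log v ≥
      (v ^ β - w ^ β) / β -
        (v ^ β * Real.cos (t * Real.log v - Real.arctan (t / β)) -
          w ^ β * Real.cos (t * Real.log w - Real.arctan (t / β))) /
          Real.sqrt (β ^ 2 + t ^ 2) -
        2 * ε * (v ^ β + w ^ β) -
        ε * (α + Real.sqrt (α ^ 2 + t ^ 2)) * (v ^ β - w ^ β) / β :=
  stmt_12_general α β t w v ε hα0 hα1 hβ hw hwv hθ
end

section
/- Let 1 < w₀ < w₁ and let f be a differentiable function on [w₀,w₁] with f(t) > 0 and f'(t) < 0 for all t ∈ [w₀,w₁]. Suppose t − 2·√t < θ(t) ≤ t for all t ∈ [w₀,w₁]. Then ∫_{w₀}^{w₁} (1 − 1/√t)·f(t) dt + ( w₀ − θ(w₀) − 2·√w₀ )·f(w₀) ≤ ∑_{w₀ < p ≤ w₁, p prime} f(p)·log p ≤ ∫_{w₀}^{w₁} f(t) dt + ( w₀ − θ(w₀) )·f(w₀). -/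
/-!
By Abel summation, `∑_{w₀ < p ≤ w₁} f(p) log p = θ(w₁) f(w₁) - θ(w₀) f(w₀) - ∫ θ f'`. Since `f' < 0`,
replacing `θ` in the integral by a smooth upper (lower) bound `g` can only increase (decrease)
`-∫ θ f'`, and integrating `∫ g f'` by parts turns it into `∫ g' f` plus boundary terms. At `w₁`
the leftover boundary term `(θ(w₁) - g(w₁)) f(w₁)` has the right sign because `f(w₁) > 0`.
The theorem takes `g(t) = t` and `g(t) = t - 2√t`.
-/

open MeasureTheory intervalIntegral Finset

theorem integrableOn_deriv_of_deriv_nonpos {f : ℝ → ℝ} {a b : ℝ}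
    (hf : ∀ t ∈ Set.Icc a b, DifferentiableAt ℝ f t) (hf' : ∀ t ∈ Set.Icc a b, deriv f t ≤ 0) :
    IntegrableOn (deriv f) (Set.Icc a b) := by
  rw [integrableOn_Icc_iff_integrableOn_Ioc]
  have hneg : IntegrableOn (fun t => -deriv f t) (Set.Ioc a b) :=
    integrableOn_deriv_of_nonneg (g := fun t => -f t)
      (fun t ht => (hf t ht).continuousAt.continuousWithinAt.neg)
      (fun t ht => (hf t (Set.Ioo_subset_Icc_self ht)).hasDerivAt.neg)
      (fun t ht => neg_nonneg.mpr (hf' t (Set.Ioo_subset_Icc_self ht)))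
  simpa using hneg.neg

section AbelComparison

variable (c : ℕ → ℝ) {f g g' : ℝ → ℝ} {a b : ℝ}

theorem sum_mul_le_integral_of_sum_Icc_le (ha : 0 ≤ a) (hab : a ≤ b)
    (hf : ∀ t ∈ Set.Icc a b, DifferentiableAt ℝ f t) (hf' : ∀ t ∈ Set.Icc a b, deriv f t ≤ 0)
    (hfb : 0 ≤ f b) (hg : ∀ t ∈ Set.Icc a b, HasDerivAt g (g' t) t)
    (hg' : IntervalIntegrable g' volume a b)
    (hcg : ∀ t ∈ Set.Icc a b, ∑ k ∈ Icc 0 ⌊t⌋₊, c k ≤ g t) :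
    ∑ k ∈ Ioc ⌊a⌋₊ ⌊b⌋₊, f k * c k
      ≤ (∫ t in a..b, g' t * f t) + (g a - ∑ k ∈ Icc 0 ⌊a⌋₊, c k) * f a := by
  have hIcc : Set.uIcc a b = Set.Icc a b := Set.uIcc_of_le hab
  have hf'int := integrableOn_deriv_of_deriv_nonpos hf hf'
  have hf'ii : IntervalIntegrable (deriv f) volume a b :=
    (intervalIntegrable_iff_integrableOn_Icc_of_le hab).mpr hf'int
  have abel := sum_mul_eq_sub_sub_integral_mul c ha hab hf hf'int
  rw [← integral_of_le hab] at abel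
  have parts : ∫ t in a..b, g t * deriv f t = g b * f b - g a * f a - ∫ t in a..b, g' t * f t :=
    integral_mul_deriv_eq_deriv_mul (fun t ht => hg t (hIcc ▸ ht))
      (fun t ht => (hf t (hIcc ▸ ht)).hasDerivAt) hg' hf'ii
  have compare : ∫ t in a..b, g t * deriv f t ≤ ∫ t in a..b, deriv f t * ∑ k ∈ Icc 0 ⌊t⌋₊, c k := by
    refine integral_mono_on hab
      (hf'ii.continuousOn_mul fun t ht => (hg t (hIcc ▸ ht)).continuousAt.continuousWithinAt)
      ((intervalIntegrable_iff_integrableOn_Icc_of_le hab).mpr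
        (integrableOn_mul_sum_Icc c ha hf'int)) fun t ht => ?_
    rw [mul_comm (g t)]
    exact mul_le_mul_of_nonpos_left (hcg t ht) (hf' t ht)
  have boundary : f b * ∑ k ∈ Icc 0 ⌊b⌋₊, c k ≤ f b * g b :=
    mul_le_mul_of_nonneg_left (hcg b ⟨hab, le_rfl⟩) hfb
  linarith

theorem integral_le_sum_mul_of_le_sum_Icc (ha : 0 ≤ a) (hab : a ≤ b)
    (hf : ∀ t ∈ Set.Icc a b, DifferentiableAt ℝ f t) (hf' : ∀ t ∈ Set.Icc a b, deriv f t ≤ 0)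
    (hfb : 0 ≤ f b) (hg : ∀ t ∈ Set.Icc a b, HasDerivAt g (g' t) t)
    (hg' : IntervalIntegrable g' volume a b)
    (hcg : ∀ t ∈ Set.Icc a b, g t ≤ ∑ k ∈ Icc 0 ⌊t⌋₊, c k) :
    (∫ t in a..b, g' t * f t) + (g a - ∑ k ∈ Icc 0 ⌊a⌋₊, c k) * f a
      ≤ ∑ k ∈ Ioc ⌊a⌋₊ ⌊b⌋₊, f k * c k := by
  have h := sum_mul_le_integral_of_sum_Icc_le (fun k => -c k) (g := fun t => -g t)
    (g' := fun t => -g' t) ha hab hf hf' hfb (fun t ht => (hg t ht).neg) hg'.neg fun t ht => by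
      simpa only [Finset.sum_neg_distrib, neg_le_neg_iff] using hcg t ht
  simp only [mul_neg, neg_mul, Finset.sum_neg_distrib, intervalIntegral.integral_neg] at h
  linarith

end AbelComparison

noncomputable def primeLog (k : ℕ) : ℝ := if k.Prime then Real.log k else 0

theorem sum_Icc_primeLog (x : ℝ) : ∑ k ∈ Icc 0 ⌊x⌋₊, primeLog k = theta x := by
  rw [theta, sum_filter]
  exact sum_congr (by ext; simp) fun _ _ => rfl

theorem sum_prime_gt_eq_sum_Ioc_primeLog (f : ℝ → ℝ) {a : ℝ} (ha : 0 ≤ a) (b : ℝ) :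
    ∑ p ∈ (range (⌊b⌋₊ + 1)).filter (fun p : ℕ => p.Prime ∧ a < (p : ℝ)), f p * Real.log p
      = ∑ k ∈ Ioc ⌊a⌋₊ ⌊b⌋₊, f k * primeLog k := by
  have hset : (range (⌊b⌋₊ + 1)).filter (fun p : ℕ => p.Prime ∧ a < (p : ℝ))
      = (Ioc ⌊a⌋₊ ⌊b⌋₊).filter Nat.Prime := by
    ext k
    simp only [mem_filter, mem_range, mem_Ioc, Nat.lt_succ_iff, Nat.floor_lt ha]
    tauto
  rw [hset, sum_filter]
  exact sum_congr rfl fun k _ => by by_cases hk : k.Prime <;> simp [primeLog, hk]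

theorem hasDerivAt_sub_two_mul_sqrt {t : ℝ} (ht : 0 < t) :
    HasDerivAt (fun x => x - 2 * Real.sqrt x) (1 - 1 / Real.sqrt t) t := by
  have hs : Real.sqrt t ≠ 0 := (Real.sqrt_pos.mpr ht).ne'
  refine ((hasDerivAt_id t).sub ((Real.hasDerivAt_sqrt ht.ne').const_mul 2)).congr_deriv ?_
  field_simp

theorem stmt_16 (w₀ w₁ : ℝ) (f : ℝ → ℝ) (hw₀ : 1 < w₀) (hw : w₀ < w₁)
    (hdiff : ∀ t ∈ Set.Icc w₀ w₁, DifferentiableAt ℝ f t)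
    (hpos : ∀ t ∈ Set.Icc w₀ w₁, 0 < f t)
    (hder : ∀ t ∈ Set.Icc w₀ w₁, deriv f t < 0)
    (hθ : ∀ t ∈ Set.Icc w₀ w₁, t - 2 * Real.sqrt t < theta t ∧ theta t ≤ t) :
    (∫ t in w₀..w₁, (1 - 1 / Real.sqrt t) * f t) +
        (w₀ - theta w₀ - 2 * Real.sqrt w₀) * f w₀
      ≤ (∑ p ∈ (Finset.range (⌊w₁⌋₊ + 1)).filter
            (fun p : ℕ => Nat.Prime p ∧ w₀ < (p : ℝ)), f p * Real.log p) ∧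
    (∑ p ∈ (Finset.range (⌊w₁⌋₊ + 1)).filter
          (fun p : ℕ => Nat.Prime p ∧ w₀ < (p : ℝ)), f p * Real.log p)
      ≤ (∫ t in w₀..w₁, f t) + (w₀ - theta w₀) * f w₀ := by
  have hw₀' : 0 ≤ w₀ := by linarith
  have hder' : ∀ t ∈ Set.Icc w₀ w₁, deriv f t ≤ 0 := fun t ht => (hder t ht).le
  have hfw₁ : 0 ≤ f w₁ := (hpos w₁ ⟨hw.le, le_rfl⟩).le
  have hsqrt' : IntervalIntegrable (fun t => 1 - 1 / Real.sqrt t) volume w₀ w₁ := by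
    refine ContinuousOn.intervalIntegrable fun t ht => ?_
    have : 0 < t := by linarith [(Set.uIcc_of_le hw.le ▸ ht).1]
    exact (continuousAt_const.sub (continuousAt_const.div Real.continuous_sqrt.continuousAt
      (by positivity))).continuousWithinAt
  rw [sum_prime_gt_eq_sum_Ioc_primeLog f hw₀']
  constructor
  · have h := integral_le_sum_mul_of_le_sum_Icc primeLog hw₀' hw.le hdiff hder' hfw₁
      (fun t ht => hasDerivAt_sub_two_mul_sqrt (by linarith [ht.1])) hsqrt'
      fun t ht => by rw [sum_Icc_primeLog]; exact (hθ t ht).1.le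
    rw [sum_Icc_primeLog] at h
    linarith
  · have h := sum_mul_le_integral_of_sum_Icc_le primeLog hw₀' hw.le hdiff hder' hfw₁
      (fun t _ => hasDerivAt_id t) intervalIntegrable_const
      fun t ht => by rw [sum_Icc_primeLog]; exact (hθ t ht).2
    simpa only [one_mul, id, sum_Icc_primeLog] using h
end

section
/- For all real x ≥ y ≥ 2, one has ∑_{n ≤ x, P(n) ≤ y} log n ≤ ∑_{m ≤ x, P(m) ≤ y} π( min{y, x/m} ) · log(x/m), where both sums run over positive integers all of whose prime factors are at most y. -/
/-!
Since `log n = ∑_{d ∣ n} Λ(d)` and the factorisations `n = m d` of a `y`-smooth `n ≤ x` are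
exactly the pairs of a `y`-smooth `m ≤ x` and a `y`-smooth `d ≤ x / m`, the left-hand side equals
`∑_m ∑_{d ≤ x/m, P(d) ≤ y} Λ(d)`. In the inner sum every prime power `d = p^k` has
`p ≤ min(y, x/m)`, and the powers of a fixed prime `p` up to `x / m` contribute at most
`log p · ⌊log_p (x/m)⌋ ≤ log (x/m)`.
-/

/-- The prime-counting function `π(x)`: the number of primes `p ≤ x`. -/
noncomputable def primePi (x : ℝ) : ℕ :=
  ((Finset.range (⌊x⌋₊ + 1)).filter Nat.Prime).card

/-- The `y`-smooth positive integers up to `x`: those `1 ≤ n ≤ x` all of whose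
prime factors are at most `y` (i.e. `P(n) ≤ y`). -/
noncomputable def smoothUpTo (x y : ℝ) : Finset ℕ :=
  (Finset.Icc 1 ⌊x⌋₊).filter (fun n : ℕ => ∀ p ∈ n.primeFactors, (p : ℝ) ≤ y)

open Finset ArithmeticFunction

theorem mem_smoothUpTo {x y : ℝ} {n : ℕ} :
    n ∈ smoothUpTo x y ↔ 0 < n ∧ (n : ℝ) ≤ x ∧ ∀ p ∈ n.primeFactors, (p : ℝ) ≤ y := by
  simp only [smoothUpTo, mem_filter, mem_Icc, Nat.one_le_iff_ne_zero, Nat.pos_iff_ne_zero]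
  constructor
  · rintro ⟨⟨hn, hnx⟩, hsmooth⟩
    exact ⟨hn, (Nat.le_floor_iff' hn).1 hnx, hsmooth⟩
  · rintro ⟨hn, hnx, hsmooth⟩
    exact ⟨⟨hn, (Nat.le_floor_iff' hn).2 hnx⟩, hsmooth⟩

theorem mul_mem_smoothUpTo_iff {x y : ℝ} {m d : ℕ} :
    m * d ∈ smoothUpTo x y ↔ m ∈ smoothUpTo x y ∧ d ∈ smoothUpTo (x / m) y := by
  rcases Nat.eq_zero_or_pos m with rfl | hm
  · simp [mem_smoothUpTo]
  rcases Nat.eq_zero_or_pos d with rfl | hd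
  · simp [mem_smoothUpTo]
  have hm' : (0 : ℝ) < m := by exact_mod_cast hm
  have hmd : (m : ℝ) ≤ m * d := le_mul_of_one_le_right hm'.le (by exact_mod_cast hd)
  simp only [mem_smoothUpTo, Nat.primeFactors_mul hm.ne' hd.ne', forall_mem_union,
    le_div_iff₀' hm', Nat.cast_mul, Nat.mul_pos hm hd, hm, hd, true_and]
  constructor
  · rintro ⟨hx, hsm_m, hsm_d⟩
    exact ⟨⟨hmd.trans hx, hsm_m⟩, hx, hsm_d⟩
  · rintro ⟨⟨-, hsm_m⟩, hx, hsm_d⟩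
    exact ⟨hx, hsm_m, hsm_d⟩

theorem sum_smoothUpTo_sum_divisors {M : Type*} [AddCommMonoid M] (f : ℕ → M) (x y : ℝ) :
    ∑ n ∈ smoothUpTo x y, ∑ d ∈ n.divisors, f d
      = ∑ m ∈ smoothUpTo x y, ∑ d ∈ smoothUpTo (x / m) y, f d := by
  rw [sum_sigma', sum_sigma']
  refine sum_nbij' (fun a => ⟨a.1 / a.2, a.2⟩) (fun b => ⟨b.1 * b.2, b.2⟩) ?_ ?_ ?_ ?_
    fun _ _ => rfl
  · rintro ⟨n, d⟩ h
    simp only [mem_sigma, Nat.mem_divisors] at h ⊢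
    rw [← mul_mem_smoothUpTo_iff, Nat.div_mul_cancel h.2.1]
    exact h.1
  · rintro ⟨m, d⟩ h
    simp only [mem_sigma, Nat.mem_divisors] at h ⊢
    have hmd := mul_mem_smoothUpTo_iff.2 h
    exact ⟨hmd, dvd_mul_left d m, (mem_smoothUpTo.1 hmd).1.ne'⟩
  · rintro ⟨n, d⟩ h
    simp only [mem_sigma, Nat.mem_divisors] at h
    simp [Nat.div_mul_cancel h.2.1]
  · rintro ⟨m, d⟩ h
    simp only [mem_sigma] at h
    simp [Nat.mul_div_cancel m (mem_smoothUpTo.1 h.2).1]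

theorem sum_vonMangoldt_primePow_minFac_le {p : ℕ} (hp : p.Prime) (N : ℕ) :
    ∑ d ∈ (Icc 1 N).filter (fun d => IsPrimePow d ∧ d.minFac = p), Λ d ≤ Real.log N := by
  rcases Nat.eq_zero_or_pos N with rfl | hN
  · simp
  have hsub : (Icc 1 N).filter (fun d => IsPrimePow d ∧ d.minFac = p)
      ⊆ (Icc 1 (Nat.log p N)).image (p ^ ·) := by
    intro d hd
    simp only [mem_filter, mem_Icc] at hd
    obtain ⟨⟨-, hdN⟩, hpow, rfl⟩ := hd
    refine mem_image.2 ⟨d.factorization d.minFac, mem_Icc.2 ⟨?_, ?_⟩,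
      hpow.minFac_pow_factorization_eq⟩
    · exact Nat.one_le_iff_ne_zero.2 (Nat.factorization_minFac_ne_zero hpow.one_lt)
    · exact Nat.le_log_of_pow_le hp.one_lt (hpow.minFac_pow_factorization_eq.le.trans hdN)
  have hpos : (0 : ℝ) < p ^ Nat.log p N := pow_pos (by exact_mod_cast hp.pos) _
  calc ∑ d ∈ (Icc 1 N).filter (fun d => IsPrimePow d ∧ d.minFac = p), Λ d
      ≤ ∑ d ∈ (Icc 1 (Nat.log p N)).image (p ^ ·), Λ d :=
        sum_le_sum_of_subset_of_nonneg hsub fun _ _ _ => vonMangoldt_nonneg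
    _ = ∑ k ∈ Icc 1 (Nat.log p N), Λ (p ^ k) :=
        sum_image fun _ _ _ _ h => Nat.pow_right_injective hp.two_le h
    _ = ∑ _k ∈ Icc 1 (Nat.log p N), Real.log p :=
        sum_congr rfl fun k hk => by
          rw [vonMangoldt_apply_pow (by grind), vonMangoldt_apply_prime hp]
    _ = Real.log ((p : ℝ) ^ Nat.log p N) := by simp [Real.log_pow]
    _ ≤ Real.log N := Real.log_le_log hpos (by exact_mod_cast Nat.pow_log_le_self p hN.ne')

theorem minFac_le_min_of_mem_smoothUpTo {t y : ℝ} {d : ℕ} (hd : d ∈ smoothUpTo t y)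
    (hd1 : d ≠ 1) : (d.minFac : ℝ) ≤ min y t := by
  obtain ⟨hd0, hdt, hsmooth⟩ := mem_smoothUpTo.1 hd
  exact le_min (hsmooth _ (Nat.mem_primeFactors.2 ⟨Nat.minFac_prime hd1, d.minFac_dvd, hd0.ne'⟩))
    ((Nat.cast_le.2 (Nat.minFac_le hd0)).trans hdt)

theorem sum_vonMangoldt_smoothUpTo_le (t y : ℝ) :
    ∑ d ∈ smoothUpTo t y, Λ d ≤ primePi (min y t) * Real.log t := by
  set P := (range (⌊min y t⌋₊ + 1)).filter Nat.Prime
  have hmaps : ∀ d ∈ (smoothUpTo t y).filter IsPrimePow, d.minFac ∈ P := by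
    intro d hd
    obtain ⟨hd, hpow⟩ := mem_filter.1 hd
    exact mem_filter.2 ⟨mem_range.2 (Nat.lt_succ_of_le (Nat.le_floor
      (minFac_le_min_of_mem_smoothUpTo hd hpow.ne_one))), Nat.minFac_prime hpow.ne_one⟩
  have hfiber : ∀ p ∈ P,
      ∑ d ∈ (smoothUpTo t y).filter IsPrimePow with d.minFac = p, Λ d ≤ Real.log t := by
    intro p hp
    obtain ⟨hpP, hp⟩ := mem_filter.1 hp
    have hpt : (p : ℝ) ≤ t := (Nat.le_floor_iff' hp.ne_zero).1
      (Nat.lt_succ_iff.1 (mem_range.1 hpP)) |>.trans (min_le_right _ _)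
    have hN : (0 : ℝ) < ⌊t⌋₊ := by
      exact_mod_cast (hp.pos.trans_le (Nat.le_floor hpt))
    calc ∑ d ∈ (smoothUpTo t y).filter IsPrimePow with d.minFac = p, Λ d
        ≤ ∑ d ∈ (Icc 1 ⌊t⌋₊).filter (fun d => IsPrimePow d ∧ d.minFac = p), Λ d := by
          refine sum_le_sum_of_subset_of_nonneg ?_ fun _ _ _ => vonMangoldt_nonneg
          intro d hd
          simp only [smoothUpTo, mem_filter] at hd ⊢
          exact ⟨hd.1.1.1, hd.1.2, hd.2⟩
      _ ≤ Real.log ⌊t⌋₊ := sum_vonMangoldt_primePow_minFac_le hp _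
      _ ≤ Real.log t := Real.log_le_log hN (Nat.floor_le ((Nat.cast_nonneg p).trans hpt))
  calc ∑ d ∈ smoothUpTo t y, Λ d = ∑ d ∈ (smoothUpTo t y).filter IsPrimePow, Λ d :=
        (sum_filter_of_ne fun _ _ => vonMangoldt_ne_zero_iff.1).symm
    _ = ∑ p ∈ P, ∑ d ∈ (smoothUpTo t y).filter IsPrimePow with d.minFac = p, Λ d :=
        (sum_fiberwise_of_maps_to hmaps _).symm
    _ ≤ ∑ _p ∈ P, Real.log t := sum_le_sum hfiber
    _ = primePi (min y t) * Real.log t := by rw [sum_const, nsmul_eq_mul]; rfl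

theorem stmt_19_general (x y : ℝ) :
    ∑ n ∈ smoothUpTo x y, Real.log n
      ≤ ∑ m ∈ smoothUpTo x y, (primePi (min y (x / m)) : ℝ) * Real.log (x / m) :=
  calc ∑ n ∈ smoothUpTo x y, Real.log n
      = ∑ n ∈ smoothUpTo x y, ∑ d ∈ n.divisors, Λ d :=
        sum_congr rfl fun _ _ => vonMangoldt_sum.symm
    _ = ∑ m ∈ smoothUpTo x y, ∑ d ∈ smoothUpTo (x / m) y, Λ d :=
        sum_smoothUpTo_sum_divisors _ x y
    _ ≤ _ := sum_le_sum fun _ _ => sum_vonMangoldt_smoothUpTo_le _ _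

theorem stmt_19 (x y : ℝ) (hy : 2 ≤ y) (hyx : y ≤ x) :
    ∑ n ∈ smoothUpTo x y, Real.log n
      ≤ ∑ m ∈ smoothUpTo x y, (primePi (min y (x / m)) : ℝ) * Real.log (x / m) :=
  stmt_19_general x y
end
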